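/- arXiv:2310.17435 — 6 statements merged into one kernel-verified Lean document; each statement's English description precedes it below -/
import Mathlib

section
/- Let (E,d) be a metric space and D ≥ 0 such that d(x,y) ≤ D for all x, y ∈ E, let μ be a Borel probability measure on E, and let ℓ : [0,∞) → [0,∞) be a convex nondecreasing function. Then the objective φ(α) = ∫_E ℓ(d(α,x)) dμ(x) is finite for every α ∈ E, and φ is ℓ'₊(D)-Lipschitz: |φ(α) − φ(β)| ≤ ℓ'₊(D)·d(α,β) for all α, β ∈ E. -/
open MeasureTheory

private lemma slope_bound {D : ℝ} (hD : 0 ≤ D) {ℓ : ℝ → ℝ}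
    (h_convex : ConvexOn ℝ (Set.Ici 0) ℓ)
    (h_mono : MonotoneOn ℓ (Set.Ici 0))
    {ℓpD : ℝ} (h_deriv : HasDerivWithinAt ℓ ℓpD (Set.Ici D) D) :
    (0 ≤ ℓpD) ∧ ∀ a b : ℝ, 0 ≤ a → a ≤ b → b ≤ D → ℓ b - ℓ a ≤ ℓpD * (b - a) := by
  have hDmem : D ∈ Set.Ici (0:ℝ) := hD
  -- the right derivative is the limit of slopes from the right
  have htend : Filter.Tendsto (slope ℓ D) (nhdsWithin D (Set.Ioi D)) (nhds ℓpD) := by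
    have := (hasDerivWithinAt_iff_tendsto_slope).mp h_deriv
    have hset : Set.Ici D \ {D} = Set.Ioi D := by
      ext z; simp [Set.mem_diff, lt_iff_le_and_ne, eq_comm, and_comm]
    rwa [hset] at this
  have hslope_nonneg : ∀ z ∈ Set.Ioi D, 0 ≤ slope ℓ D z := by
    intro z hz
    rw [slope_def_field]
    have hz' : D < z := hz
    apply div_nonneg _ (by linarith)
    have := h_mono hDmem (le_trans hD hz'.le) hz'.le
    linarith
  have hpD_nonneg : 0 ≤ ℓpD :=
    ge_of_tendsto htend (Filter.eventually_of_mem self_mem_nhdsWithin hslope_nonneg)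
  refine ⟨hpD_nonneg, fun a b ha hab hbD => ?_⟩
  rcases eq_or_lt_of_le hab with rfl | hab'
  · simp
  · -- slope a b ≤ ℓpD
    have hbmem : b ∈ Set.Ici (0:ℝ) := le_trans ha hab
    have hslope : slope ℓ a b ≤ ℓpD := by
      refine ge_of_tendsto htend (Filter.eventually_of_mem self_mem_nhdsWithin fun z hz => ?_)
      have hz' : D < z := hz
      have hzmem : z ∈ Set.Ici (0:ℝ) := le_trans hD hz'.le
      have h1 : slope ℓ a b ≤ slope ℓ a z := by
        rw [slope_def_field, slope_def_field]
        exact h_convex.secant_mono ha hbmem hzmem (ne_of_gt hab')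
          (ne_of_gt (lt_of_le_of_lt (hab'.le.trans hbD) hz')) (hbD.trans hz'.le)
      have h2 : slope ℓ a z ≤ slope ℓ D z := by
        rw [slope_comm ℓ a z, slope_comm ℓ D z, slope_def_field, slope_def_field]
        exact h_convex.secant_mono hzmem ha hDmem
          (ne_of_lt (lt_of_lt_of_le (lt_of_lt_of_le hab' hbD) hz'.le))
          (ne_of_lt hz') (le_trans hab'.le hbD)
      exact h1.trans h2
    rw [slope_def_field, div_le_iff₀ (by linarith)] at hslope
    linarith

/-- Let `(E,d)` be a metric space with diameter bounded by `D`, `μ` a Borel probability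
measure on `E`, and `ℓ : [0,∞) → [0,∞)` convex nondecreasing with right derivative
`ℓpD` at `D`. Then `φ(α) = ∫ ℓ(d(α,x)) dμ(x)` is finite (the integrand is integrable)
for every `α`, and `φ` is `ℓ'₊(D)`-Lipschitz. -/
theorem stmt_5 {E : Type*} [MetricSpace E] [MeasurableSpace E] [BorelSpace E]
    (D : ℝ) (hD : 0 ≤ D) (hdiam : ∀ x y : E, dist x y ≤ D)
    (μ : Measure E) [IsProbabilityMeasure μ]
    (ℓ : ℝ → ℝ)
    (h_convex : ConvexOn ℝ (Set.Ici 0) ℓ)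
    (h_mono : MonotoneOn ℓ (Set.Ici 0))
    (h_nonneg : ∀ z ∈ Set.Ici (0 : ℝ), 0 ≤ ℓ z)
    (ℓpD : ℝ) (h_deriv : HasDerivWithinAt ℓ ℓpD (Set.Ici D) D) :
    (∀ α : E, Integrable (fun x => ℓ (dist α x)) μ) ∧
    (∀ α β : E,
      |(∫ x, ℓ (dist α x) ∂μ) - ∫ x, ℓ (dist β x) ∂μ| ≤ ℓpD * dist α β) := by
  obtain ⟨hpD_nonneg, hkey⟩ := slope_bound hD h_convex h_mono h_deriv
  -- measurability via the monotone extension g z = ℓ (max z 0)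
  have hg_mono : Monotone (fun z : ℝ => ℓ (max z 0)) := fun z w hzw =>
    h_mono (le_max_right z 0) (le_max_right w 0) (max_le_max hzw le_rfl)
  have hg_meas : Measurable (fun z : ℝ => ℓ (max z 0)) := hg_mono.measurable
  have hmeas : ∀ α : E, AEStronglyMeasurable (fun x => ℓ (dist α x)) μ := by
    intro α
    have : (fun x : E => ℓ (dist α x)) = (fun z : ℝ => ℓ (max z 0)) ∘ (fun x => dist α x) := by
      funext x; simp [max_eq_left dist_nonneg]
    rw [this]
    exact (hg_meas.comp (Continuous.measurable
      (continuous_const.dist continuous_id))).aestronglyMeasurable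
  have hint : ∀ α : E, Integrable (fun x => ℓ (dist α x)) μ := by
    intro α
    refine Integrable.mono' (integrable_const (ℓ D)) (hmeas α)
      (Filter.Eventually.of_forall fun x => ?_)
    rw [Real.norm_eq_abs, abs_of_nonneg (h_nonneg _ dist_nonneg)]
    exact h_mono dist_nonneg (Set.mem_Ici.mpr hD) (hdiam α x)
  refine ⟨hint, fun α β => ?_⟩
  have hpt : ∀ x : E, |ℓ (dist α x) - ℓ (dist β x)| ≤ ℓpD * dist α β := by
    intro x
    rcases le_total (dist α x) (dist β x) with h | h
    · have h1 : ℓ (dist α x) ≤ ℓ (dist β x) := h_mono dist_nonneg (dist_nonneg.trans h) h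
      rw [abs_sub_comm, abs_of_nonneg (by linarith)]
      have h2 := hkey (dist α x) (dist β x) dist_nonneg h (hdiam β x)
      have h3 : dist β x - dist α x ≤ dist β α := by
        have := abs_dist_sub_le β α x; rw [abs_le] at this; linarith [this.2]
      have h4 := mul_le_mul_of_nonneg_left h3 hpD_nonneg
      rw [dist_comm β α] at h4
      linarith
    · have h1 : ℓ (dist β x) ≤ ℓ (dist α x) := h_mono dist_nonneg (dist_nonneg.trans h) h
      rw [abs_of_nonneg (by linarith)]
      have h2 := hkey (dist β x) (dist α x) dist_nonneg h (hdiam α x)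
      have h3 : dist α x - dist β x ≤ dist α β := by
        have := abs_dist_sub_le α β x; rw [abs_le] at this; linarith [this.2]
      have h4 := mul_le_mul_of_nonneg_left h3 hpD_nonneg
      linarith
  calc |(∫ x, ℓ (dist α x) ∂μ) - ∫ x, ℓ (dist β x) ∂μ|
      = |∫ x, (ℓ (dist α x) - ℓ (dist β x)) ∂μ| := by
        rw [integral_sub (hint α) (hint β)]
    _ ≤ ∫ x, |ℓ (dist α x) - ℓ (dist β x)| ∂μ := by
        simpa [Real.norm_eq_abs] using
          norm_integral_le_integral_norm (fun x => ℓ (dist α x) - ℓ (dist β x))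
    _ ≤ ∫ _x, ℓpD * dist α β ∂μ := by
        refine integral_mono_of_nonneg (Filter.Eventually.of_forall fun x => abs_nonneg _)
          (integrable_const _) (Filter.Eventually.of_forall hpt)
    _ = ℓpD * dist α β := by simp
end

section
/- Let ℓ : [0,∞) → [0,∞) be a convex nondecreasing function and μ a Borel probability measure on ℝ whose support is contained in a compact interval, and let φ(α) = ∫_ℝ ℓ(|α − x|) dμ(x). Then for every α ∈ ℝ, φ has a (finite) right derivative at α equal to ∫_{(−∞,α]} ℓ'₊(α − x) dμ(x) − ∫_{(α,∞)} ℓ'₋(x − α) dμ(x), and a (finite) left derivative at α equal to −( ∫_{[α,∞)} ℓ'₊(x − α) dμ(x) − ∫_{(−∞,α)} ℓ'₋(α − x) dμ(x) ). -/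
/-!
For each `y`, the map `β ↦ ℓ |β - y|` has right derivative `ℓ'₊(α - y)` at `α` if `y ≤ α` and
`-ℓ'₋(y - α)` if `y > α`. A convex function on `[0, ∞)` with a finite right derivative at `0` is
Lipschitz on every `[0, C]`, so the difference quotients of these maps are bounded uniformly for
`y` in the compact support, and dominated convergence moves the one-sided limit under the
integral. The left derivative at `α` is minus the right derivative at `-α` of the objective for
the reflection of `μ` under `x ↦ -x`.
-/

open MeasureTheory Set Filter Topology
open scoped NNReal

theorem continuousOn_Ici_of_hasDerivWithinAt_Ici_Iic {f fr fl : ℝ → ℝ} {a : ℝ}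
    (h_right : ∀ z, a ≤ z → HasDerivWithinAt f (fr z) (Ici z) z)
    (h_left : ∀ z, a < z → HasDerivWithinAt f (fl z) (Iic z) z) :
    ContinuousOn f (Ici a) := by
  intro z hz
  rcases (mem_Ici.1 hz).eq_or_lt with rfl | hz
  · exact (h_right _ le_rfl).continuousWithinAt
  · exact (continuousAt_iff_continuous_left_right.2
      ⟨(h_left z hz).continuousWithinAt, (h_right z hz.le).continuousWithinAt⟩).continuousWithinAt

namespace ConvexOn

variable {f : ℝ → ℝ} {a p : ℝ}

theorem abs_slope_le_of_hasDerivWithinAt_Ici (hf : ConvexOn ℝ (Ici a) f)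
    (hp : HasDerivWithinAt f p (Ici a) a) {b u v : ℝ} (hu : a ≤ u) (huv : u < v) (hv : v ≤ b) :
    |slope f u v| ≤ max |p| |slope f b (b + 1)| := by
  have hva : a ≤ v := hu.trans huv.le
  have lower : p ≤ slope f u v := calc
    p ≤ slope f a v := hf.le_slope_of_hasDerivWithinAt_Ioi self_mem_Ici hva (hu.trans_lt huv)
          hp.Ioi_of_Ici
    _ = slope f v a := slope_comm f a v
    _ ≤ slope f v u := hf.slope_mono hva ⟨self_mem_Ici, (hu.trans_lt huv).ne⟩
          ⟨hu, huv.ne⟩ hu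
    _ = slope f u v := slope_comm f v u
  have upper : slope f u v ≤ slope f b (b + 1) := calc
    slope f u v = slope f v u := slope_comm f u v
    _ ≤ slope f v (b + 1) := hf.slope_mono hva ⟨hu, huv.ne⟩
          ⟨mem_Ici.2 (by linarith), (by linarith : v < b + 1).ne'⟩ (by linarith)
    _ = slope f (b + 1) v := slope_comm f v (b + 1)
    _ ≤ slope f (b + 1) b := hf.slope_mono (mem_Ici.2 (by linarith))
          ⟨hva, (by linarith : v < b + 1).ne⟩ ⟨mem_Ici.2 (hva.trans hv), (lt_add_one b).ne⟩ hv
    _ = slope f b (b + 1) := slope_comm f (b + 1) b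
  rw [abs_le]
  constructor <;> linarith [neg_abs_le p, le_abs_self (slope f b (b + 1)),
    le_max_left |p| |slope f b (b + 1)|, le_max_right |p| |slope f b (b + 1)|]

theorem exists_lipschitzOnWith_Icc_of_hasDerivWithinAt_Ici (hf : ConvexOn ℝ (Ici a) f)
    (hp : HasDerivWithinAt f p (Ici a) a) (b : ℝ) :
    ∃ K : ℝ≥0, LipschitzOnWith K f (Icc a b) := by
  refine ⟨Real.toNNReal (max |p| |slope f b (b + 1)|),
    LipschitzOnWith.of_dist_le' fun u hu v hv ↦ ?_⟩
  wlog huv : u ≤ v generalizing u v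
  · rw [dist_comm, dist_comm u]
    exact this v hv u hu (le_of_not_ge huv)
  rcases huv.eq_or_lt with rfl | huv
  · simp
  rw [dist_comm, dist_comm u, Real.dist_eq, Real.dist_eq]
  calc |f v - f u| = |slope f u v| * |v - u| := by
        rw [slope_def_field, abs_div, div_mul_cancel₀ _ (abs_pos.2 (sub_ne_zero.2 huv.ne')).ne']
    _ ≤ max |p| |slope f b (b + 1)| * |v - u| := by
        gcongr
        exact hf.abs_slope_le_of_hasDerivWithinAt_Ici hp hu.1 huv hv.2

end ConvexOn

theorem LipschitzOnWith.abs_slope_le {g : ℝ → ℝ} {K : ℝ≥0} {s : Set ℝ}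
    (hg : LipschitzOnWith K g s) {a b : ℝ} (ha : a ∈ s) (hb : b ∈ s) :
    |slope g a b| ≤ K := by
  rcases eq_or_ne a b with rfl | hab
  · simp
  rw [slope_def_field, abs_div, div_le_iff₀ (abs_pos.2 (sub_ne_zero.2 hab.symm))]
  simpa only [Real.dist_eq] using hg.dist_le_mul b hb a ha

theorem LipschitzOnWith.comp_abs_sub {ℓ : ℝ → ℝ} {K : ℝ≥0} {C : ℝ}
    (hℓ : LipschitzOnWith K ℓ (Icc 0 C)) (y : ℝ) :
    LipschitzOnWith K (fun β ↦ ℓ |β - y|) {β | |β - y| ≤ C} :=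
  LipschitzOnWith.of_dist_le_mul fun β hβ β' hβ' ↦ calc
    dist (ℓ |β - y|) (ℓ |β' - y|) ≤ K * dist |β - y| |β' - y| :=
      hℓ.dist_le_mul _ ⟨abs_nonneg _, hβ⟩ _ ⟨abs_nonneg _, hβ'⟩
    _ ≤ K * dist β β' := by
      gcongr
      simpa only [Real.dist_eq, sub_sub_sub_cancel_right] using
        abs_abs_sub_abs_le_abs_sub (β - y) (β' - y)

theorem hasDerivWithinAt_comp_abs_sub_Ici {ℓ ℓp ℓm : ℝ → ℝ}
    (h_right : ∀ z, 0 ≤ z → HasDerivWithinAt ℓ (ℓp z) (Ici z) z)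
    (h_left : ∀ z, 0 < z → HasDerivWithinAt ℓ (ℓm z) (Iic z) z) (α y : ℝ) :
    HasDerivWithinAt (fun β ↦ ℓ |β - y|) (if y ≤ α then ℓp (α - y) else -ℓm (y - α))
      (Ici α) α := by
  split_ifs with hy
  · have h : HasDerivWithinAt (fun β ↦ ℓ (β - y)) (ℓp (α - y)) (Ici α) α := by
      simpa only [Function.comp_def, id, one_smul] using (h_right _ (sub_nonneg.2 hy)).scomp α
        ((hasDerivWithinAt_id α (Ici α)).sub_const y) fun β hβ ↦ sub_le_sub_right hβ y
    refine h.congr (fun β hβ ↦ ?_) (by rw [abs_of_nonneg (sub_nonneg.2 hy)])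
    rw [abs_of_nonneg (sub_nonneg.2 (hy.trans hβ))]
  · have hy : α < y := not_le.1 hy
    have h : HasDerivWithinAt (fun β ↦ ℓ (y - β)) (-ℓm (y - α)) (Ici α) α := by
      simpa only [Function.comp_def, neg_smul, one_smul] using (h_left _ (sub_pos.2 hy)).scomp α
        ((hasDerivWithinAt_id α (Ici α)).const_sub y) fun β hβ ↦ sub_le_sub_left hβ y
    refine h.congr_of_eventuallyEq ?_ (by rw [abs_sub_comm, abs_of_pos (sub_pos.2 hy)])
    filter_upwards [mem_nhdsWithin_of_mem_nhds (Iio_mem_nhds hy)] with β hβ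
    rw [abs_sub_comm, abs_of_pos (sub_pos.2 hβ)]

section Integral

variable {X : Type*} [MeasurableSpace X] {μ : Measure X}

theorem integrable_comp_of_ae_mem_Icc [IsFiniteMeasure μ] {g : ℝ → ℝ} (hg : Continuous g)
    {f : X → ℝ} (hf : AEMeasurable f μ) {A B : ℝ} (hfAB : ∀ᵐ x ∂μ, f x ∈ Icc A B) :
    Integrable (fun x ↦ g (f x)) μ := by
  obtain ⟨C, hC⟩ := isCompact_Icc.exists_bound_of_continuousOn hg.continuousOn
  exact Integrable.of_bound (hg.comp_aestronglyMeasurable hf.aestronglyMeasurable) C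
    (hfAB.mono fun x hx ↦ hC _ hx)

theorem hasDerivWithinAt_integral_of_dominated_loc_of_lip {F : ℝ → X → ℝ} {F' : X → ℝ}
    {s t : Set ℝ} {a : ℝ} {K : X → ℝ≥0} [(𝓝[s \ {a}] a).NeBot] (ht : t ∈ 𝓝[s] a)
    (hat : a ∈ t) (hF_int : ∀ b, Integrable (F b) μ)
    (h_lipsch : ∀ᵐ x ∂μ, LipschitzOnWith (K x) (F · x) t)
    (hK_int : Integrable (fun x ↦ (K x : ℝ)) μ)
    (h_diff : ∀ᵐ x ∂μ, HasDerivWithinAt (F · x) (F' x) s a) :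
    Integrable F' μ ∧ HasDerivWithinAt (fun b ↦ ∫ x, F b x ∂μ) (∫ x, F' x ∂μ) s a := by
  have ht' : t ∈ 𝓝[s \ {a}] a := nhdsWithin_mono a sdiff_subset ht
  have h_slope_int : ∀ b, Integrable (fun x ↦ slope (F · x) a b) μ := fun b ↦
    ((hF_int b).sub (hF_int a)).const_mul (b - a)⁻¹
  have h_slope_le : ∀ᵐ x ∂μ, ∀ b ∈ t, ‖slope (F · x) a b‖ ≤ K x :=
    h_lipsch.mono fun x hx b hb ↦ hx.abs_slope_le hat hb
  have h_lim : ∀ᵐ x ∂μ, Tendsto (slope (F · x) a) (𝓝[s \ {a}] a) (𝓝 (F' x)) :=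
    h_diff.mono fun x hx ↦ hasDerivWithinAt_iff_tendsto_slope.1 hx
  refine ⟨hK_int.mono' (aestronglyMeasurable_of_tendsto_ae _
    (fun b ↦ (h_slope_int b).aestronglyMeasurable) h_lim) ?_, ?_⟩
  · filter_upwards [h_lim, h_slope_le] with x hx hxK
    exact le_of_tendsto hx.norm (eventually_of_mem ht' hxK)
  have h_slope_integral : slope (fun b ↦ ∫ x, F b x ∂μ) a =
      fun b ↦ ∫ x, slope (F · x) a b ∂μ := by
    ext b
    simp only [slope_def_field, integral_div, integral_sub (hF_int b) (hF_int a)]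
  rw [hasDerivWithinAt_iff_tendsto_slope, h_slope_integral]
  exact tendsto_integral_filter_of_dominated_convergence _
    (Eventually.of_forall fun b ↦ (h_slope_int b).aestronglyMeasurable)
    (eventually_of_mem ht' fun b hb ↦ h_slope_le.mono fun x hx ↦ hx b hb) hK_int h_lim

theorem hasDerivWithinAt_integral_comp_abs_sub_Ici [IsFiniteMeasure μ] {ℓ ℓp ℓm : ℝ → ℝ}
    (h_convex : ConvexOn ℝ (Ici 0) ℓ)
    (h_right : ∀ z, 0 ≤ z → HasDerivWithinAt ℓ (ℓp z) (Ici z) z)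
    (h_left : ∀ z, 0 < z → HasDerivWithinAt ℓ (ℓm z) (Iic z) z) {f : X → ℝ} (hf : Measurable f)
    {A B : ℝ} (hfAB : ∀ᵐ x ∂μ, f x ∈ Icc A B) (α : ℝ) :
    HasDerivWithinAt (fun β ↦ ∫ x, ℓ |β - f x| ∂μ)
      ((∫ x in {x | f x ≤ α}, ℓp (α - f x) ∂μ) - ∫ x in {x | α < f x}, ℓm (f x - α) ∂μ)
      (Ici α) α := by
  have hℓ_cont : ContinuousOn ℓ (Ici 0) :=
    continuousOn_Ici_of_hasDerivWithinAt_Ici_Iic h_right h_left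
  obtain ⟨K, hK⟩ := h_convex.exists_lipschitzOnWith_Icc_of_hasDerivWithinAt_Ici (h_right 0 le_rfl)
    (max (α + 1 - A) (B - α))
  have h_lipsch : ∀ᵐ x ∂μ, LipschitzOnWith K (fun β ↦ ℓ |β - f x|) (Icc α (α + 1)) :=
    hfAB.mono fun x hx ↦ (hK.comp_abs_sub (f x)).mono fun β hβ ↦ by
      rw [mem_ofPred_eq, abs_le]
      constructor <;> linarith [hx.1, hx.2, hβ.1, hβ.2, le_max_left (α + 1 - A) (B - α),
        le_max_right (α + 1 - A) (B - α)]
  have : (𝓝[Ici α \ {α}] α).NeBot := by rw [Ici_sdiff_left]; infer_instance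
  obtain ⟨hD_int, hD⟩ := hasDerivWithinAt_integral_of_dominated_loc_of_lip
    (F := fun β x ↦ ℓ |β - f x|)
    (Icc_mem_nhdsGE (lt_add_one α)) (left_mem_Icc.2 (lt_add_one α).le)
    (fun β ↦ integrable_comp_of_ae_mem_Icc
      (hℓ_cont.comp_continuous (by fun_prop) fun y ↦ abs_nonneg (β - y)) hf.aemeasurable hfAB)
    h_lipsch (integrable_const (K : ℝ))
    (ae_of_all _ fun x ↦ hasDerivWithinAt_comp_abs_sub_Ici h_right h_left α (f x))
  convert hD using 1
  have h_meas : MeasurableSet {x | f x ≤ α} := measurableSet_le hf measurable_const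
  rw [← integral_add_compl h_meas hD_int, compl_ofPred, sub_eq_add_neg, ← integral_neg]
  simp only [not_le]
  congr 1
  · exact setIntegral_congr_fun h_meas fun x hx ↦ (if_pos hx).symm
  · exact setIntegral_congr_fun (measurableSet_lt measurable_const hf) fun x hx ↦
      (if_neg (not_le.2 hx)).symm

end Integral

theorem stmt_8_general (ℓ : ℝ → ℝ)
    (h_convex : ConvexOn ℝ (Set.Ici 0) ℓ)
    (ℓp ℓm : ℝ → ℝ)
    (h_right : ∀ z, 0 ≤ z → HasDerivWithinAt ℓ (ℓp z) (Set.Ici z) z)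
    (h_left : ∀ z, 0 < z → HasDerivWithinAt ℓ (ℓm z) (Set.Iic z) z)
    (μ : Measure ℝ) [IsProbabilityMeasure μ]
    (A B : ℝ) (hsupp : μ (Set.Icc A B) = 1) :
    ∀ α : ℝ,
      HasDerivWithinAt (fun β : ℝ => ∫ x, ℓ |β - x| ∂μ)
        ((∫ x in Set.Iic α, ℓp (α - x) ∂μ) - ∫ x in Set.Ioi α, ℓm (x - α) ∂μ)
        (Set.Ici α) α ∧
      HasDerivWithinAt (fun β : ℝ => ∫ x, ℓ |β - x| ∂μ)
        (-((∫ x in Set.Ici α, ℓp (x - α) ∂μ) - ∫ x in Set.Iio α, ℓm (α - x) ∂μ))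
        (Set.Iic α) α := by
  have hAB : ∀ᵐ x ∂μ, x ∈ Icc A B :=
    (ae_mem_iff_measure_eq measurableSet_Icc.nullMeasurableSet).2 (by rw [hsupp, measure_univ])
  intro α
  refine ⟨hasDerivWithinAt_integral_comp_abs_sub_Ici h_convex h_right h_left measurable_id hAB α,
    ?_⟩
  have h_refl := hasDerivWithinAt_integral_comp_abs_sub_Ici h_convex h_right h_left measurable_neg
    (hAB.mono fun x hx ↦ ⟨neg_le_neg hx.2, neg_le_neg hx.1⟩) (-α)
  have h := h_refl.comp α (hasDerivWithinAt_neg α (Iic α)) fun β (hβ : β ≤ α) ↦ neg_le_neg hβ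
  simp only [Function.comp_def, neg_sub_neg, abs_sub_comm, neg_le_neg_iff, neg_lt_neg_iff,
    mul_neg_one] at h
  exact h

/-- Let `ℓ : [0,∞) → [0,∞)` be convex nondecreasing with one-sided derivative
functions `ℓp` (right) and `ℓm` (left), and `μ` a Borel probability measure on `ℝ`
with support contained in a compact interval. Then `φ(α) = ∫ ℓ(|α − x|) dμ(x)` has
at every `α` a right derivative `∫_{(−∞,α]} ℓ'₊(α−x) dμ − ∫_{(α,∞)} ℓ'₋(x−α) dμ`
and a left derivative `−(∫_{[α,∞)} ℓ'₊(x−α) dμ − ∫_{(−∞,α)} ℓ'₋(α−x) dμ)`. -/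
theorem stmt_8 (ℓ : ℝ → ℝ)
    (h_convex : ConvexOn ℝ (Set.Ici 0) ℓ)
    (h_mono : MonotoneOn ℓ (Set.Ici 0))
    (h_nonneg : ∀ z ∈ Set.Ici (0 : ℝ), 0 ≤ ℓ z)
    (ℓp ℓm : ℝ → ℝ)
    (h_right : ∀ z, 0 ≤ z → HasDerivWithinAt ℓ (ℓp z) (Set.Ici z) z)
    (h_left : ∀ z, 0 < z → HasDerivWithinAt ℓ (ℓm z) (Set.Iic z) z)
    (μ : Measure ℝ) [IsProbabilityMeasure μ]
    (A B : ℝ) (hsupp : μ (Set.Icc A B) = 1) :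
    ∀ α : ℝ,
      HasDerivWithinAt (fun β : ℝ => ∫ x, ℓ |β - x| ∂μ)
        ((∫ x in Set.Iic α, ℓp (α - x) ∂μ) - ∫ x in Set.Ioi α, ℓm (x - α) ∂μ)
        (Set.Ici α) α ∧
      HasDerivWithinAt (fun β : ℝ => ∫ x, ℓ |β - x| ∂μ)
        (-((∫ x in Set.Ici α, ℓp (x - α) ∂μ) - ∫ x in Set.Iio α, ℓm (α - x) ∂μ))
        (Set.Iic α) α :=
  stmt_8_general ℓ h_convex ℓp ℓm h_right h_left μ A B hsupp
end

section
/- Let ℓ : [0,∞) → [0,∞) be a convex strictly increasing function, let A < B be reals with D = B − A, let μ be a Borel probability measure on ℝ with support contained in [A,B], and let c ∈ [A,B]. Define D⁺(c) = ∫_{(−∞,c]} ℓ'₊(c − x) dμ(x) − ∫_{(c,∞)} ℓ'₋(x − c) dμ(x) and D⁻(c) = ∫_{[c,∞)} ℓ'₊(x − c) dμ(x) − ∫_{(−∞,c)} ℓ'₋(c − x) dμ(x), and assume D⁺(c) > 0 and D⁻(c) > 0. Then c is the unique minimizer over ℝ of φ(α) = ∫ ℓ(|α − x|) dμ(x); moreover,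 if X₁, …, X_n are i.i.d. with distribution μ and φ̂_n(α) = (1/n) Σ_{k=1}^n ℓ(|α − X_k|), then the set of minimizers of φ̂_n over ℝ equals {c} with probability at least 1 − exp(−n·D⁺(c)²/(2 ℓ'₊(D)²)) − exp(−n·D⁻(c)²/(2 ℓ'₊(D)²)). -/
/-!
For fixed `x`, the map `α ↦ ℓ |α - x|` is convex, so by the tangent-line inequality
`ℓ |β - x| - ℓ |t - x|` is at least `β - t` times its right derivative at `t`. Integrating against
any finite measure, a positive right derivative at `c` makes `c` strictly better than every
`β > c`, and a positive derivative toward the left handles `β < c`. For `μ` this gives the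
population statement. For the empirical measure `∑ₖ δ_{X k}` the two one-sided derivatives are
sums of `n` i.i.d. variables with means `D⁺`, `D⁻`, bounded by `ℓp (B - A)` in absolute value, so
by Hoeffding's inequality each of them is `≤ 0` with probability at most
`exp (-n D² / (2 ℓp (B - A) ^ 2))`; outside these two events the empirical minimiser is `{c}`.
-/

open MeasureTheory Set Filter

lemma setOf_forall_le_eq_singleton {α β : Type*} [Preorder β] {f : α → β} {c : α}
    (h : ∀ a ≠ c, f c < f a) : {a | ∀ b, f a ≤ f b} = {c} := by
  ext a
  refine ⟨fun ha ↦ by_contra fun hac ↦ (h a hac).not_ge (ha c), ?_⟩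
  rintro rfl b
  rcases eq_or_ne b a with rfl | hb
  exacts [le_rfl, (h b hb).le]

lemma integral_lt_integral_of_mul_le_sub {α : Type*} [MeasurableSpace α] {ν : Measure α}
    {f g k : α → ℝ} {a : ℝ} (hf : Integrable f ν) (hg : Integrable g ν) (hk : Integrable k ν)
    (ha : 0 < a) (hk_pos : 0 < ∫ x, k x ∂ν) (hle : ∀ x, a * k x ≤ g x - f x) :
    ∫ x, f x ∂ν < ∫ x, g x ∂ν := by
  have h : a * ∫ x, k x ∂ν ≤ (∫ x, g x ∂ν) - ∫ x, f x ∂ν := by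
    rw [← integral_const_mul, ← integral_sub hg hf]
    exact integral_mono (hk.const_mul a) (hg.sub hf) hle
  linarith [mul_pos ha hk_pos]

lemma integrable_finsetSum_dirac {ι α : Type*} [Fintype ι] [MeasurableSpace α]
    [MeasurableSingletonClass α] (x : ι → α) (f : α → ℝ) :
    Integrable f (∑ i, Measure.dirac (x i)) :=
  integrable_finsetSum_measure.mpr fun _ _ ↦ integrable_dirac enorm_lt_top

lemma integral_finsetSum_dirac {ι α : Type*} [Fintype ι] [MeasurableSpace α]
    [MeasurableSingletonClass α] (x : ι → α) (f : α → ℝ) :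
    ∫ y, f y ∂(∑ i, Measure.dirac (x i)) = ∑ i, f (x i) := by
  simp [integral_finsetSum_measure fun _ _ ↦ integrable_dirac (f := f) enorm_lt_top]

/-- The right derivative at `t` of `α ↦ ℓ |α - x|`; the derivative toward the left at `t` is
`absLossRightDeriv ℓp ℓm (-t) (-x)`. -/
noncomputable def absLossRightDeriv (ℓp ℓm : ℝ → ℝ) (t x : ℝ) : ℝ :=
  if x ≤ t then ℓp (t - x) else -ℓm (x - t)

section Loss

variable {ℓ ℓp ℓm : ℝ → ℝ} (hconv : ConvexOn ℝ (Ici 0) ℓ) (hmono : MonotoneOn ℓ (Ici 0))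
  (hright : ∀ z, 0 ≤ z → HasDerivWithinAt ℓ (ℓp z) (Ici z) z)
  (hleft : ∀ z, 0 < z → HasDerivWithinAt ℓ (ℓm z) (Iic z) z)

include hconv hright in
lemma loss_rightDeriv_le_slope {z w : ℝ} (hz : 0 ≤ z) (hzw : z < w) : ℓp z ≤ slope ℓ z w :=
  hconv.le_slope_of_hasDerivWithinAt_Ioi hz (hz.trans hzw.le) hzw
    ((hright z hz).mono Ioi_subset_Ici_self)

include hconv hleft in
lemma loss_slope_le_leftDeriv {w z : ℝ} (hw : 0 ≤ w) (hwz : w < z) : slope ℓ w z ≤ ℓm z :=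
  hconv.slope_le_of_hasDerivWithinAt_Iio hw (hw.trans hwz.le) hwz
    ((hleft z (hw.trans_lt hwz)).mono Iio_subset_Iic_self)

include hconv hright hleft in
lemma loss_leftDeriv_le_rightDeriv {z : ℝ} (hz : 0 < z) : ℓm z ≤ ℓp z := by
  have hint : z ∈ interior (Ici (0 : ℝ)) := by rwa [interior_Ici]
  rw [← ((hleft z hz).mono Iio_subset_Iic_self).derivWithin (uniqueDiffWithinAt_Iio z),
    ← ((hright z hz.le).mono Ioi_subset_Ici_self).derivWithin (uniqueDiffWithinAt_Ioi z)]
  exact hconv.leftDeriv_le_rightDeriv_of_mem_interior hint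

include hconv hright hleft in
lemma loss_monotoneOn_rightDeriv : MonotoneOn ℓp (Ici 0) := by
  intro z hz w _ hzw
  rcases hzw.eq_or_lt with rfl | hzw
  · rfl
  calc ℓp z ≤ slope ℓ z w := loss_rightDeriv_le_slope hconv hright hz hzw
    _ ≤ ℓm w := loss_slope_le_leftDeriv hconv hleft hz hzw
    _ ≤ ℓp w := loss_leftDeriv_le_rightDeriv hconv hright hleft (lt_of_le_of_lt hz hzw)

include hconv hright hleft in
lemma loss_monotoneOn_leftDeriv : MonotoneOn ℓm (Ioi 0) := by
  intro z (hz : 0 < z) w _ hzw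
  rcases hzw.eq_or_lt with rfl | hzw
  · rfl
  calc ℓm z ≤ ℓp z := loss_leftDeriv_le_rightDeriv hconv hright hleft hz
    _ ≤ slope ℓ z w := loss_rightDeriv_le_slope hconv hright hz.le hzw
    _ ≤ ℓm w := loss_slope_le_leftDeriv hconv hleft hz.le hzw

include hmono hright in
lemma loss_rightDeriv_nonneg {z : ℝ} (hz : 0 ≤ z) : 0 ≤ ℓp z := by
  refine (hright z hz).nonneg_of_monotoneOn ?_ (hmono.mono (Ici_subset_Ici.mpr hz))
  rw [accPt_principal_iff_nhdsWithin, Ici_sdiff_left]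
  infer_instance

include hmono hleft in
lemma loss_leftDeriv_nonneg {z : ℝ} (hz : 0 < z) : 0 ≤ ℓm z := by
  refine ((hleft z hz).mono Icc_subset_Iic_self).nonneg_of_monotoneOn ?_
    (hmono.mono Icc_subset_Ici_self)
  rw [accPt_principal_iff_nhdsWithin, Icc_sdiff_right]
  exact (nhdsWithin_Ico_eq_nhdsLT hz).symm ▸ inferInstance

include hright hleft in
lemma loss_continuousOn : ContinuousOn ℓ (Ici 0) := by
  intro z (hz : 0 ≤ z)
  rcases hz.eq_or_lt with rfl | hz
  · exact (hright 0 le_rfl).continuousWithinAt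
  · have h := (hleft z hz).continuousWithinAt.union (hright z hz.le).continuousWithinAt
    rw [Iic_union_Ici, continuousWithinAt_univ] at h
    exact h.continuousWithinAt

include hright hleft in
lemma integrable_loss_of_ae_mem_Icc {ν : Measure ℝ} [IsFiniteMeasure ν] {A B : ℝ}
    (hν : ∀ᵐ x ∂ν, x ∈ Icc A B) (β : ℝ) : Integrable (fun x ↦ ℓ |β - x|) ν := by
  rw [← Measure.restrict_eq_self_of_ae_mem hν]
  exact ((loss_continuousOn hright hleft).comp_continuous (by fun_prop)
    fun x ↦ abs_nonneg (β - x)).integrableOn_Icc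

lemma absLossRightDeriv_of_le {t x : ℝ} (h : x ≤ t) :
    absLossRightDeriv ℓp ℓm t x = ℓp (t - x) := if_pos h

lemma absLossRightDeriv_of_lt {t x : ℝ} (h : t < x) :
    absLossRightDeriv ℓp ℓm t x = -ℓm (x - t) := if_neg h.not_ge

include hconv hmono hright hleft in
lemma antitone_absLossRightDeriv (t : ℝ) : Antitone (absLossRightDeriv ℓp ℓm t) := by
  intro x y hxy
  rcases le_or_gt y t with hy | hy
  · rw [absLossRightDeriv_of_le hy, absLossRightDeriv_of_le (hxy.trans hy)]
    exact loss_monotoneOn_rightDeriv hconv hright hleft (sub_nonneg.mpr hy)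
      (sub_nonneg.mpr (hxy.trans hy)) (by linarith)
  rw [absLossRightDeriv_of_lt hy]
  rcases le_or_gt x t with hx | hx
  · rw [absLossRightDeriv_of_le hx]
    linarith [loss_leftDeriv_nonneg hmono hleft (sub_pos.mpr hy),
      loss_rightDeriv_nonneg hmono hright (sub_nonneg.mpr hx)]
  · rw [absLossRightDeriv_of_lt hx, neg_le_neg_iff]
    exact loss_monotoneOn_leftDeriv hconv hright hleft (sub_pos.mpr hx) (sub_pos.mpr hy)
      (by linarith)

include hconv hmono hright hleft in
lemma absLossRightDeriv_mem_Icc {t x L : ℝ} (hx : |t - x| ≤ L) :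
    absLossRightDeriv ℓp ℓm t x ∈ Icc (-ℓp L) (ℓp L) := by
  have hL : 0 ≤ L := (abs_nonneg _).trans hx
  have hℓpL := loss_rightDeriv_nonneg hmono hright hL
  rw [abs_le] at hx
  rcases le_or_gt x t with hxt | hxt
  · rw [absLossRightDeriv_of_le hxt]
    exact ⟨by linarith [loss_rightDeriv_nonneg hmono hright (sub_nonneg.mpr hxt)],
      loss_monotoneOn_rightDeriv hconv hright hleft (sub_nonneg.mpr hxt) hL (by linarith)⟩
  · rw [absLossRightDeriv_of_lt hxt]
    have hz : 0 < x - t := sub_pos.mpr hxt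
    exact ⟨neg_le_neg ((loss_leftDeriv_le_rightDeriv hconv hright hleft hz).trans
        (loss_monotoneOn_rightDeriv hconv hright hleft hz.le hL (by linarith))),
      by linarith [loss_leftDeriv_nonneg hmono hleft hz]⟩

include hconv hmono hright hleft in
lemma ae_absLossRightDeriv_mem_Icc {ν : Measure ℝ} {A B t : ℝ} (hν : ∀ᵐ x ∂ν, x ∈ Icc A B)
    (ht : t ∈ Icc A B) :
    ∀ᵐ x ∂ν, absLossRightDeriv ℓp ℓm t x ∈ Icc (-ℓp (B - A)) (ℓp (B - A)) :=
  hν.mono fun x hx ↦ absLossRightDeriv_mem_Icc hconv hmono hright hleft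
    (abs_sub_le_iff.mpr ⟨by linarith [hx.1, ht.2], by linarith [hx.2, ht.1]⟩)

include hconv hmono hright hleft in
lemma ae_absLossRightDeriv_neg_mem_Icc {ν : Measure ℝ} {A B t : ℝ} (hν : ∀ᵐ x ∂ν, x ∈ Icc A B)
    (ht : t ∈ Icc A B) :
    ∀ᵐ x ∂ν, absLossRightDeriv ℓp ℓm (-t) (-x) ∈ Icc (-ℓp (B - A)) (ℓp (B - A)) :=
  hν.mono fun x hx ↦ absLossRightDeriv_mem_Icc hconv hmono hright hleft
    (abs_sub_le_iff.mpr ⟨by linarith [hx.2, ht.1], by linarith [hx.1, ht.2]⟩)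

include hconv hmono hright hleft in
lemma sub_mul_absLossRightDeriv_le {t β : ℝ} (htβ : t < β) (x : ℝ) :
    (β - t) * absLossRightDeriv ℓp ℓm t x ≤ ℓ |β - x| - ℓ |t - x| := by
  rcases le_or_gt x t with hxt | hxt
  · rw [absLossRightDeriv_of_le hxt, abs_of_nonneg (by linarith), abs_of_nonneg (by linarith)]
    have h := loss_rightDeriv_le_slope hconv hright (sub_nonneg.mpr hxt)
      (sub_lt_sub_right htβ x)
    rw [slope_def_field, le_div_iff₀ (by linarith)] at h
    linarith
  rw [absLossRightDeriv_of_lt hxt, abs_of_neg (sub_neg.mpr hxt), neg_sub]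
  have hz : 0 < x - t := sub_pos.mpr hxt
  have hm := loss_leftDeriv_nonneg hmono hleft hz
  rcases le_or_gt (x - t) |β - x| with hzw | hwz
  · have := hmono (mem_Ici.mpr hz.le) (mem_Ici.mpr (abs_nonneg (β - x))) hzw
    nlinarith
  have hgap : x - t - |β - x| ≤ β - t := by linarith [neg_abs_le (β - x)]
  have h := loss_slope_le_leftDeriv hconv hleft (abs_nonneg (β - x)) hwz
  rw [slope_def_field, div_le_iff₀ (by linarith)] at h
  nlinarith

include hconv hmono hright hleft in
lemma sub_mul_absLossRightDeriv_neg_le {t β : ℝ} (hβt : β < t) (x : ℝ) :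
    (t - β) * absLossRightDeriv ℓp ℓm (-t) (-x) ≤ ℓ |β - x| - ℓ |t - x| := by
  have h := sub_mul_absLossRightDeriv_le hconv hmono hright hleft (neg_lt_neg hβt) (-x)
  rwa [neg_sub_neg, neg_sub_neg, neg_sub_neg, abs_sub_comm x β, abs_sub_comm x t] at h

lemma integral_absLossRightDeriv (ν : Measure ℝ) (t : ℝ)
    (hint : Integrable (absLossRightDeriv ℓp ℓm t) ν) :
    ∫ x, absLossRightDeriv ℓp ℓm t x ∂ν =
      (∫ x in Iic t, ℓp (t - x) ∂ν) - ∫ x in Ioi t, ℓm (x - t) ∂ν := by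
  rw [← integral_add_compl measurableSet_Iic hint, compl_Iic, sub_eq_add_neg, ← integral_neg,
    setIntegral_congr_fun measurableSet_Iic fun x hx ↦ absLossRightDeriv_of_le hx,
    setIntegral_congr_fun measurableSet_Ioi fun x hx ↦ absLossRightDeriv_of_lt hx]

lemma integral_absLossRightDeriv_neg (ν : Measure ℝ) (t : ℝ)
    (hint : Integrable (fun x ↦ absLossRightDeriv ℓp ℓm (-t) (-x)) ν) :
    ∫ x, absLossRightDeriv ℓp ℓm (-t) (-x) ∂ν =
      (∫ x in Ici t, ℓp (x - t) ∂ν) - ∫ x in Iio t, ℓm (t - x) ∂ν := by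
  rw [← integral_add_compl measurableSet_Ici hint, compl_Ici, sub_eq_add_neg, ← integral_neg,
    setIntegral_congr_fun measurableSet_Ici fun x (hx : t ≤ x) ↦ by
      rw [absLossRightDeriv_of_le (neg_le_neg hx), neg_sub_neg],
    setIntegral_congr_fun measurableSet_Iio fun x (hx : x < t) ↦ by
      rw [absLossRightDeriv_of_lt (neg_lt_neg hx), neg_sub_neg]]

include hconv hmono hright hleft in
lemma integral_loss_lt_of_absLossRightDeriv_pos (ν : Measure ℝ) {c : ℝ}
    (hint : ∀ β, Integrable (fun x ↦ ℓ |β - x|) ν)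
    (hint_right : Integrable (absLossRightDeriv ℓp ℓm c) ν)
    (hint_left : Integrable (fun x ↦ absLossRightDeriv ℓp ℓm (-c) (-x)) ν)
    (hright_pos : 0 < ∫ x, absLossRightDeriv ℓp ℓm c x ∂ν)
    (hleft_pos : 0 < ∫ x, absLossRightDeriv ℓp ℓm (-c) (-x) ∂ν) :
    ∀ β ≠ c, ∫ x, ℓ |c - x| ∂ν < ∫ x, ℓ |β - x| ∂ν := by
  intro β hβ
  rcases hβ.lt_or_gt with hβc | hcβ
  · exact integral_lt_integral_of_mul_le_sub (hint c) (hint β) hint_left (sub_pos.mpr hβc)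
      hleft_pos (sub_mul_absLossRightDeriv_neg_le hconv hmono hright hleft hβc)
  · exact integral_lt_integral_of_mul_le_sub (hint c) (hint β) hint_right (sub_pos.mpr hcβ)
      hright_pos (sub_mul_absLossRightDeriv_le hconv hmono hright hleft hcβ)

include hconv hmono hright hleft in
lemma setOf_forall_le_sum_loss_eq_singleton {ι : Type*} [Fintype ι] (x : ι → ℝ) {a c : ℝ}
    (ha : 0 < a) (hright_pos : 0 < ∑ i, absLossRightDeriv ℓp ℓm c (x i))
    (hleft_pos : 0 < ∑ i, absLossRightDeriv ℓp ℓm (-c) (-x i)) :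
    {α | ∀ β, a * ∑ i, ℓ |α - x i| ≤ a * ∑ i, ℓ |β - x i|} = {c} := by
  have h := integral_loss_lt_of_absLossRightDeriv_pos hconv hmono hright hleft
    (∑ i, Measure.dirac (x i)) (fun _ ↦ integrable_finsetSum_dirac _ _)
    (integrable_finsetSum_dirac _ _) (integrable_finsetSum_dirac _ _)
    (by rwa [integral_finsetSum_dirac]) (by rwa [integral_finsetSum_dirac])
  simp only [integral_finsetSum_dirac] at h
  exact setOf_forall_le_eq_singleton fun β hβ ↦ mul_lt_mul_of_pos_left (h β hβ) ha

end Loss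

section Concentration

open ProbabilityTheory

variable {Ω : Type*} [MeasurableSpace Ω] {P : Measure Ω} [IsProbabilityMeasure P]

lemma measureReal_sum_nonpos_le {ι : Type*} [Fintype ι] {Y : ι → Ω → ℝ}
    (h_indep : iIndepFun Y P) (h_meas : ∀ i, Measurable (Y i)) {M D : ℝ}
    (h_bound : ∀ i, ∀ᵐ ω ∂P, Y i ω ∈ Icc (-M) M) (h_mean : ∀ i, P[Y i] = D) (hD : 0 ≤ D) :
    P.real {ω | ∑ i, Y i ω ≤ 0} ≤
      Real.exp (-(Fintype.card ι : ℝ) * D ^ 2 / (2 * M ^ 2)) := by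
  set N : ℝ := (Fintype.card ι : ℝ)
  -- Hoeffding's lemma: each `D - Y i` is centred and sub-Gaussian with variance proxy `M ^ 2`.
  have h_subG : ∀ i ∈ Finset.univ, HasSubgaussianMGF (fun ω ↦ D - Y i ω)
      ((‖M - -M‖₊ / 2) ^ 2) P := fun i _ ↦
    (hasSubgaussianMGF_of_mem_Icc (h_meas i).aemeasurable (h_bound i)).neg.congr
      (ae_of_all _ fun ω ↦ by simp [h_mean i])
  have h_tail := HasSubgaussianMGF.measure_sum_ge_le_of_iIndepFun
    (h_indep.comp (fun _ y ↦ D - y) fun _ ↦ by fun_prop) h_subG (by positivity : 0 ≤ N * D)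
  have h_set : {ω | ∑ i, Y i ω ≤ 0} = {ω | N * D ≤ ∑ i, ((fun _ y ↦ D - y) i ∘ Y i) ω} := by
    ext ω
    simp [N, Finset.sum_sub_distrib]
  have h_var : ((∑ _i : ι, (‖M - -M‖₊ / 2) ^ 2 : NNReal) : ℝ) = N * M ^ 2 := by
    simp only [Finset.sum_const, Finset.card_univ, nsmul_eq_mul, NNReal.coe_mul,
      NNReal.coe_natCast, NNReal.coe_pow, NNReal.coe_div, coe_nnnorm, Real.norm_eq_abs,
      NNReal.coe_ofNat, div_pow, sq_abs]
    ring
  rw [h_set]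
  refine h_tail.trans_eq ?_
  rw [h_var]
  congr 1
  rcases eq_or_ne N 0 with hN | hN
  · simp [hN]
  · rw [show -(N * D) ^ 2 = N * (-N * D ^ 2) by ring, ← mul_div_mul_left _ (2 * M ^ 2) hN]
    ring

lemma measureReal_sum_comp_nonpos_le {ι α : Type*} [Fintype ι] [MeasurableSpace α]
    {μ : Measure α} {X : ι → Ω → α} (hX_meas : ∀ i, Measurable (X i))
    (hX_dist : ∀ i, P.map (X i) = μ) (hX_indep : iIndepFun X P) {g : α → ℝ} (hg : Measurable g)
    {M D : ℝ} (hg_bound : ∀ᵐ x ∂μ, g x ∈ Icc (-M) M) (hg_mean : ∫ x, g x ∂μ = D) (hD : 0 ≤ D) :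
    P.real {ω | ∑ i, g (X i ω) ≤ 0} ≤
      Real.exp (-(Fintype.card ι : ℝ) * D ^ 2 / (2 * M ^ 2)) := by
  refine measureReal_sum_nonpos_le (Y := fun i ↦ g ∘ X i) (hX_indep.comp _ fun _ ↦ hg)
    (fun i ↦ hg.comp (hX_meas i)) (fun i ↦ ?_) (fun i ↦ ?_) hD
  · exact ae_of_ae_map (hX_meas i).aemeasurable (by rwa [hX_dist i])
  · rw [← hg_mean, ← hX_dist i, integral_map (hX_meas i).aemeasurable hg.aestronglyMeasurable]
    rfl

lemma one_sub_sub_le_measureReal {s t u : Set Ω} (h : sᶜ ⊆ t ∪ u) :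
    1 - P.real t - P.real u ≤ P.real s := by
  have h_cover : P.real univ ≤ P.real (s ∪ (t ∪ u)) :=
    measureReal_mono fun ω _ ↦ (em (ω ∈ s)).imp_right fun hω ↦ h hω
  rw [probReal_univ] at h_cover
  linarith [measureReal_union_le (μ := P) s (t ∪ u), measureReal_union_le (μ := P) t u]

end Concentration

theorem stmt_10_general (ℓ : ℝ → ℝ)
    (h_convex : ConvexOn ℝ (Set.Ici 0) ℓ)
    (h_smono : StrictMonoOn ℓ (Set.Ici 0))
    (ℓp ℓm : ℝ → ℝ)
    (h_right : ∀ z, 0 ≤ z → HasDerivWithinAt ℓ (ℓp z) (Set.Ici z) z)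
    (h_left : ∀ z, 0 < z → HasDerivWithinAt ℓ (ℓm z) (Set.Iic z) z)
    (A B : ℝ)
    (μ : Measure ℝ) [IsProbabilityMeasure μ] (hsupp : μ (Set.Icc A B) = 1)
    (c : ℝ) (hc : c ∈ Set.Icc A B)
    (Dplus Dminus : ℝ)
    (hDplus_def :
      Dplus = (∫ x in Set.Iic c, ℓp (c - x) ∂μ) - ∫ x in Set.Ioi c, ℓm (x - c) ∂μ)
    (hDminus_def :
      Dminus = (∫ x in Set.Ici c, ℓp (x - c) ∂μ) - ∫ x in Set.Iio c, ℓm (c - x) ∂μ)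
    (hDplus : 0 < Dplus) (hDminus : 0 < Dminus)
    {Ω : Type*} [MeasurableSpace Ω] (P : Measure Ω) [IsProbabilityMeasure P]
    (n : ℕ) (hn : 1 ≤ n)
    (X : Fin n → Ω → ℝ)
    (hX_meas : ∀ k, Measurable (X k))
    (hX_dist : ∀ k, P.map (X k) = μ)
    (hX_indep : ProbabilityTheory.iIndepFun X P) :
    ({α : ℝ | ∀ β : ℝ, (∫ x, ℓ |α - x| ∂μ) ≤ ∫ x, ℓ |β - x| ∂μ} = {c}) ∧
    1 - Real.exp (-(n : ℝ) * Dplus ^ 2 / (2 * ℓp (B - A) ^ 2))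
      - Real.exp (-(n : ℝ) * Dminus ^ 2 / (2 * ℓp (B - A) ^ 2)) ≤
    (P {ω | {α : ℝ | ∀ β : ℝ,
        ((n : ℝ)⁻¹ * ∑ k, ℓ |α - X k ω|) ≤ (n : ℝ)⁻¹ * ∑ k, ℓ |β - X k ω|}
      = {c}}).toReal := by
  have hmono := h_smono.monotoneOn
  have hsupp_ae : ∀ᵐ x ∂μ, x ∈ Icc A B := (mem_ae_iff_prob_eq_one measurableSet_Icc).mpr hsupp
  set gp := absLossRightDeriv ℓp ℓm c
  set gm := fun x ↦ absLossRightDeriv ℓp ℓm (-c) (-x)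
  have hgp_meas : Measurable gp :=
    (antitone_absLossRightDeriv h_convex hmono h_right h_left c).measurable
  have hgm_meas : Measurable gm :=
    (antitone_absLossRightDeriv h_convex hmono h_right h_left (-c)).measurable.comp measurable_neg
  have hgp_bound := ae_absLossRightDeriv_mem_Icc h_convex hmono h_right h_left hsupp_ae hc
  have hgm_bound := ae_absLossRightDeriv_neg_mem_Icc h_convex hmono h_right h_left hsupp_ae hc
  have hgp_int := Integrable.of_mem_Icc _ _ hgp_meas.aemeasurable hgp_bound
  have hgm_int := Integrable.of_mem_Icc _ _ hgm_meas.aemeasurable hgm_bound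
  have hDp : ∫ x, gp x ∂μ = Dplus := by rw [hDplus_def, integral_absLossRightDeriv μ c hgp_int]
  have hDm : ∫ x, gm x ∂μ = Dminus := by
    rw [hDminus_def, integral_absLossRightDeriv_neg μ c hgm_int]
  refine ⟨setOf_forall_le_eq_singleton (integral_loss_lt_of_absLossRightDeriv_pos
    h_convex hmono h_right h_left μ (integrable_loss_of_ae_mem_Icc h_right h_left hsupp_ae)
    hgp_int hgm_int (hDp ▸ hDplus) (hDm ▸ hDminus)), ?_⟩
  have h_bad : {ω | {α : ℝ | ∀ β : ℝ,
        ((n : ℝ)⁻¹ * ∑ k, ℓ |α - X k ω|) ≤ (n : ℝ)⁻¹ * ∑ k, ℓ |β - X k ω|} = {c}}ᶜ ⊆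
      {ω | ∑ k, gp (X k ω) ≤ 0} ∪ {ω | ∑ k, gm (X k ω) ≤ 0} := by
    rw [compl_subset_comm, compl_union]
    rintro ω ⟨hp, hm⟩
    exact setOf_forall_le_sum_loss_eq_singleton h_convex hmono h_right h_left (X · ω)
      (by positivity) (not_le.mp hp) (not_le.mp hm)
  have hp_tail := measureReal_sum_comp_nonpos_le hX_meas hX_dist hX_indep hgp_meas hgp_bound
    hDp hDplus.le
  have hm_tail := measureReal_sum_comp_nonpos_le hX_meas hX_dist hX_indep hgm_meas hgm_bound
    hDm hDminus.le
  rw [Fintype.card_fin] at hp_tail hm_tail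
  refine le_trans ?_ (one_sub_sub_le_measureReal (P := P) h_bad)
  linarith

/-- Sticky case for a generalized Fréchet mean on the line: if both one-sided
derivatives of the objective at `c` are positive, then `c` is the unique population
minimizer, and the empirical minimizing set equals `{c}` with exponentially large
probability. -/
theorem stmt_10 (ℓ : ℝ → ℝ)
    (h_convex : ConvexOn ℝ (Set.Ici 0) ℓ)
    (h_smono : StrictMonoOn ℓ (Set.Ici 0))
    (h_nonneg : ∀ z ∈ Set.Ici (0 : ℝ), 0 ≤ ℓ z)
    (ℓp ℓm : ℝ → ℝ)
    (h_right : ∀ z, 0 ≤ z → HasDerivWithinAt ℓ (ℓp z) (Set.Ici z) z)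
    (h_left : ∀ z, 0 < z → HasDerivWithinAt ℓ (ℓm z) (Set.Iic z) z)
    (A B : ℝ) (hAB : A < B)
    (μ : Measure ℝ) [IsProbabilityMeasure μ] (hsupp : μ (Set.Icc A B) = 1)
    (c : ℝ) (hc : c ∈ Set.Icc A B)
    (Dplus Dminus : ℝ)
    (hDplus_def :
      Dplus = (∫ x in Set.Iic c, ℓp (c - x) ∂μ) - ∫ x in Set.Ioi c, ℓm (x - c) ∂μ)
    (hDminus_def :
      Dminus = (∫ x in Set.Ici c, ℓp (x - c) ∂μ) - ∫ x in Set.Iio c, ℓm (c - x) ∂μ)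
    (hDplus : 0 < Dplus) (hDminus : 0 < Dminus)
    {Ω : Type*} [MeasurableSpace Ω] (P : Measure Ω) [IsProbabilityMeasure P]
    (n : ℕ) (hn : 1 ≤ n)
    (X : Fin n → Ω → ℝ)
    (hX_meas : ∀ k, Measurable (X k))
    (hX_dist : ∀ k, P.map (X k) = μ)
    (hX_indep : ProbabilityTheory.iIndepFun X P) :
    ({α : ℝ | ∀ β : ℝ, (∫ x, ℓ |α - x| ∂μ) ≤ ∫ x, ℓ |β - x| ∂μ} = {c}) ∧
    1 - Real.exp (-(n : ℝ) * Dplus ^ 2 / (2 * ℓp (B - A) ^ 2))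
      - Real.exp (-(n : ℝ) * Dminus ^ 2 / (2 * ℓp (B - A) ^ 2)) ≤
    (P {ω | {α : ℝ | ∀ β : ℝ,
        ((n : ℝ)⁻¹ * ∑ k, ℓ |α - X k ω|) ≤ (n : ℝ)⁻¹ * ∑ k, ℓ |β - X k ω|}
      = {c}}).toReal :=
  stmt_10_general ℓ h_convex h_smono ℓp ℓm h_right h_left A B μ hsupp c hc Dplus Dminus hDplus_def
    hDminus_def hDplus hDminus P n hn X hX_meas hX_dist hX_indep
end

section
/- Let ℓ : [0,∞) → [0,∞) be a convex strictly increasing function, let A < B be reals, let μ be a Borel probability measure on ℝ with support contained in [A,B], and let c ∈ (A,B). For a Borel probability measure ν supported in [A,B], write φ_ν(α) = ∫ ℓ(|α − x|) dν(x), D⁺_ν(c) = ∫_{(−∞,c]} ℓ'₊(c − x) dν(x) − ∫_{(c,∞)} ℓ'₋(x − c) dν(x) and D⁻_ν(c) = ∫_{[c,∞)} ℓ'₊(x − c) dν(x) − ∫_{(−∞,c)} ℓ'₋(c − x) dν(x). Then the following are equivalent: (i) D⁺_μ(c) > 0 and D⁻_μ(c) > 0; (ii) there exists ε > 0 such that for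 every Borel probability measure ν supported in [A,B] with total variation distance tv(ν, μ) ≤ ε, the set of minimizers of φ_ν over ℝ equals {c}. -/
/-!
For a probability measure `ν` on `[A, B]`, the objective `φ_ν α = ∫ ℓ |α - x| dν` is convex,
and dominated convergence shows that `D⁺_ν(c)` is its right derivative at `c`. So `D⁺_ν(c) > 0`
makes `c` strictly better than every point to its right, while `D⁺_ν(c) < 0` yields a better
point to the right.

`D⁺_ν(c) = ∫ g dν` for an antitone kernel `g` (the right derivative of `α ↦ ℓ |α - x|` at `c`),
so by the layer-cake formula `|D⁺_ν(c) - D⁺_μ(c)| ≤ (g A - g B) · tv(ν, μ)` and positivity at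
`μ` survives small perturbations. Conversely, if `D⁺_μ(c) ≤ 0`, moving mass `t` to `B` gives
`D⁺ = (1 - t) D⁺_μ(c) - t ℓ'₋(B - c) < 0` at distance at most `t` from `μ`. The statements
about `D⁻` and points to the left follow by reflecting `x ↦ -x`.
-/

open MeasureTheory Set Filter Topology

theorem ae_mem_of_measure_eq_one {X : Type*} [MeasurableSpace X] {ν : Measure X}
    [IsProbabilityMeasure ν] {s : Set X} (hs : MeasurableSet s) (h : ν s = 1) :
    ∀ᵐ x ∂ν, x ∈ s :=
  (ae_iff_prob_eq_one (measurable_mem.mpr hs)).mpr h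

theorem abs_integral_sub_integral_le_of_forall_abs_measure_sub_le {X : Type*}
    [MeasurableSpace X] {μ ν : Measure X} [IsProbabilityMeasure μ] [IsProbabilityMeasure ν] {ε : ℝ}
    (htv : ∀ s, MeasurableSet s → |(ν s).toReal - (μ s).toReal| ≤ ε)
    {f : X → ℝ} (hf : Measurable f) {a b : ℝ}
    (hμ : ∀ᵐ x ∂μ, f x ∈ Icc a b) (hν : ∀ᵐ x ∂ν, f x ∈ Icc a b) :
    |∫ x, f x ∂ν - ∫ x, f x ∂μ| ≤ (b - a) * ε := by
  obtain ⟨x₀, hx₀⟩ := hμ.exists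
  have hab : 0 ≤ b - a := sub_nonneg.mpr (hx₀.1.trans hx₀.2)
  have layer_cake : ∀ ρ : Measure X, IsProbabilityMeasure ρ → (∀ᵐ x ∂ρ, f x ∈ Icc a b) →
      ∫ x, f x ∂ρ = a + ∫ t in Ioc 0 (b - a), ρ.real {x | t ≤ f x - a} := by
    intro ρ _ hρ
    have hfint : Integrable f ρ := .of_bound hf.aestronglyMeasurable (max |a| |b|) <|
      hρ.mono fun x hx => abs_le_max_abs_abs hx.1 hx.2
    rw [← Integrable.integral_eq_integral_Ioc_meas_le (f := fun x => f x - a)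
      (hfint.sub (integrable_const a))
      (hρ.mono fun x hx => sub_nonneg.mpr hx.1) (hρ.mono fun x hx => sub_le_sub_right hx.2 a),
      integral_sub hfint (integrable_const a)]
    simp
  have hint : ∀ ρ : Measure X, IsProbabilityMeasure ρ →
      IntegrableOn (fun t => ρ.real {x | t ≤ f x - a}) (Ioc 0 (b - a)) :=
    fun ρ _ => by
      have hanti : Antitone fun t => ρ.real {x | t ≤ f x - a} :=
        fun s t hst => measureReal_mono fun x (hx : t ≤ f x - a) => hst.trans hx
      exact ((hanti.antitoneOn _).integrableOn_isCompact isCompact_Icc).mono_set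
        Ioc_subset_Icc_self
  rw [layer_cake μ ‹_› hμ, layer_cake ν ‹_› hν, add_sub_add_left_eq_sub,
    ← integral_sub (hint ν ‹_›) (hint μ ‹_›), ← Real.norm_eq_abs]
  calc _ ≤ ε * volume.real (Ioc 0 (b - a)) :=
        norm_setIntegral_le_of_norm_le_const measure_Ioc_lt_top
          fun t _ => htv _ (measurableSet_le measurable_const (hf.sub_const a))
    _ = (b - a) * ε := by rw [Real.volume_real_Ioc_of_le hab, sub_zero, mul_comm]

noncomputable section

section Mixture

variable {X : Type*} [MeasurableSpace X] {μ : Measure X} {t : ℝ} {y : X}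

def mixDirac (μ : Measure X) (t : ℝ) (y : X) : Measure X :=
  ENNReal.ofReal (1 - t) • μ + ENNReal.ofReal t • Measure.dirac y

theorem mixDirac_apply_toReal [IsFiniteMeasure μ] (ht : t ∈ Icc (0 : ℝ) 1) (s : Set X) :
    (mixDirac μ t y s).toReal = (1 - t) * (μ s).toReal + t * (Measure.dirac y s).toReal := by
  rw [mixDirac, Measure.add_apply, Measure.smul_apply, Measure.smul_apply, smul_eq_mul,
    smul_eq_mul, ENNReal.toReal_add (by finiteness) (by finiteness), ENNReal.toReal_mul,
    ENNReal.toReal_mul, ENNReal.toReal_ofReal (sub_nonneg.mpr ht.2), ENNReal.toReal_ofReal ht.1]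

theorem isProbabilityMeasure_mixDirac [IsProbabilityMeasure μ] (ht : t ∈ Icc (0 : ℝ) 1) :
    IsProbabilityMeasure (mixDirac μ t y) := by
  constructor
  rw [mixDirac, Measure.add_apply, Measure.smul_apply, Measure.smul_apply, measure_univ,
    measure_univ, smul_eq_mul, smul_eq_mul, mul_one, mul_one,
    ← ENNReal.ofReal_add (sub_nonneg.mpr ht.2) ht.1, sub_add_cancel, ENNReal.ofReal_one]

theorem mixDirac_apply_eq_one [IsProbabilityMeasure μ] (ht : t ∈ Icc (0 : ℝ) 1) {s : Set X}
    (hs : MeasurableSet s) (hμ : μ s = 1) (hy : y ∈ s) : mixDirac μ t y s = 1 := by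
  have := isProbabilityMeasure_mixDirac (y := y) (μ := μ) ht
  rw [← ENNReal.toReal_eq_one_iff, mixDirac_apply_toReal ht, hμ, Measure.dirac_apply' y hs,
    indicator_of_mem hy]
  simp

theorem abs_mixDirac_apply_sub_le [IsProbabilityMeasure μ] (ht : t ∈ Icc (0 : ℝ) 1)
    (s : Set X) : |(mixDirac μ t y s).toReal - (μ s).toReal| ≤ t := by
  have hμ : (μ s).toReal ∈ Icc (0 : ℝ) 1 := ⟨ENNReal.toReal_nonneg, measureReal_le_one⟩
  have hδ : (Measure.dirac y s).toReal ∈ Icc (0 : ℝ) 1 :=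
    ⟨ENNReal.toReal_nonneg, measureReal_le_one⟩
  rw [mixDirac_apply_toReal ht, abs_le]
  constructor <;> nlinarith [hμ.1, hμ.2, hδ.1, hδ.2, ht.1, ht.2]

theorem integral_mixDirac [MeasurableSingletonClass X] [IsFiniteMeasure μ]
    (ht : t ∈ Icc (0 : ℝ) 1) {f : X → ℝ} (hf : Integrable f μ) :
    ∫ x, f x ∂mixDirac μ t y = (1 - t) * ∫ x, f x ∂μ + t * f y := by
  rw [mixDirac, integral_add_measure (hf.smul_measure ENNReal.ofReal_ne_top)
      ((integrable_dirac enorm_lt_top).smul_measure ENNReal.ofReal_ne_top),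
    integral_smul_measure, integral_smul_measure, integral_dirac,
    ENNReal.toReal_ofReal (sub_nonneg.mpr ht.2), ENNReal.toReal_ofReal ht.1, smul_eq_mul,
    smul_eq_mul]

end Mixture

section Reflection

variable {G : Type*} [MeasurableSpace G] [InvolutiveNeg G] [MeasurableNeg G] {ν μ : Measure G}

instance isProbabilityMeasure_neg [IsProbabilityMeasure ν] : IsProbabilityMeasure ν.neg :=
  Measure.isProbabilityMeasure_map measurable_neg.aemeasurable

theorem forall_abs_neg_measure_sub_le {ε : ℝ}
    (h : ∀ s, MeasurableSet s → |(ν s).toReal - (μ s).toReal| ≤ ε) :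
    ∀ s, MeasurableSet s → |(ν.neg s).toReal - (μ.neg s).toReal| ≤ ε := fun s hs => by
  simpa only [Measure.neg_apply] using h (-s) hs.neg

end Reflection

theorem setOf_forall_le_eq_singleton_iff {α β : Type*} [LinearOrder β] {f : α → β} {c : α} :
    {a | ∀ b, f a ≤ f b} = {c} ↔ ∀ b ≠ c, f c < f b := by
  rw [eq_singleton_iff_unique_mem]
  constructor
  · rintro ⟨hc, hunique⟩ b hb
    by_contra! hle
    exact hb (hunique b fun b' => hle.trans (hc b'))
  · intro h
    refine ⟨fun b => ?_, fun a ha => ?_⟩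
    · rcases eq_or_ne b c with rfl | hb
      exacts [le_rfl, (h b hb).le]
    · by_contra hac
      exact (ha c).not_gt (h a hac)

namespace LossMinimizer

def objective (ℓ : ℝ → ℝ) (ν : Measure ℝ) (α : ℝ) : ℝ := ∫ x, ℓ |α - x| ∂ν

def derivRight (ℓp ℓm : ℝ → ℝ) (ν : Measure ℝ) (c : ℝ) : ℝ :=
  (∫ x in Iic c, ℓp (c - x) ∂ν) - ∫ x in Ioi c, ℓm (x - c) ∂ν

def derivLeft (ℓp ℓm : ℝ → ℝ) (ν : Measure ℝ) (c : ℝ) : ℝ :=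
  (∫ x in Ici c, ℓp (x - c) ∂ν) - ∫ x in Iio c, ℓm (c - x) ∂ν

/-- The right derivative of `α ↦ ℓ |α - x|` at `α = c`. -/
def rightDerivKernel (ℓp ℓm : ℝ → ℝ) (c x : ℝ) : ℝ :=
  if x ≤ c then ℓp (c - x) else -ℓm (x - c)

variable {ℓ ℓp ℓm : ℝ → ℝ} {a b c M A B : ℝ} {ν μ : Measure ℝ}

theorem objective_neg (β : ℝ) : objective ℓ ν.neg (-β) = objective ℓ ν β := by
  rw [objective, Measure.neg_def, measurableEmbedding_neg.integral_map]
  exact integral_congr_ae (ae_of_all _ fun x => by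
    simp only [show -β - -x = -(β - x) by ring, abs_neg])

theorem derivRight_neg : derivRight ℓp ℓm ν.neg (-c) = derivLeft ℓp ℓm ν c := by
  rw [derivRight, Measure.neg_def, measurableEmbedding_neg.setIntegral_map,
    measurableEmbedding_neg.setIntegral_map]
  simp [derivLeft, sub_eq_add_neg, add_comm]

theorem derivRight_eq_integral (h : Integrable (rightDerivKernel ℓp ℓm c) ν) :
    derivRight ℓp ℓm ν c = ∫ x, rightDerivKernel ℓp ℓm c x ∂ν := by
  rw [← integral_add_compl measurableSet_Iic h, compl_Iic, derivRight, sub_eq_add_neg,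
    ← integral_neg]
  congr 1
  · refine setIntegral_congr_fun measurableSet_Iic fun x (hx : x ≤ c) => ?_
    rw [rightDerivKernel, if_pos hx]
  · refine setIntegral_congr_fun measurableSet_Ioi fun x (hx : c < x) => ?_
    rw [rightDerivKernel, if_neg (not_le.mpr hx)]

section ConvexLoss

variable (hconv : ConvexOn ℝ (Ici 0) ℓ) (hmono : StrictMonoOn ℓ (Ici 0))
  (hright : ∀ z, 0 ≤ z → HasDerivWithinAt ℓ (ℓp z) (Ici z) z)
  (hleft : ∀ z, 0 < z → HasDerivWithinAt ℓ (ℓm z) (Iic z) z)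

include hconv hright in
theorem rightDeriv_le_slope (ha : 0 ≤ a) (hab : a < b) : ℓp a ≤ slope ℓ a b :=
  hconv.le_slope_of_hasDerivWithinAt_Ioi ha (ha.trans hab.le) hab (hright a ha).Ioi_of_Ici

include hconv hleft in
theorem slope_le_leftDeriv (ha : 0 ≤ a) (hab : a < b) : slope ℓ a b ≤ ℓm b :=
  hconv.slope_le_of_hasDerivWithinAt_Iio ha (ha.trans hab.le) hab
    (hleft b (ha.trans_lt hab)).Iio_of_Iic

include hconv hright hleft in
theorem leftDeriv_le_rightDeriv (hb : 0 < b) : ℓm b ≤ ℓp b := by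
  have hint : b ∈ interior (Ici (0 : ℝ)) := by rwa [interior_Ici]
  rw [← (hleft b hb).Iio_of_Iic.derivWithin (uniqueDiffWithinAt_Iio b),
    ← (hright b hb.le).Ioi_of_Ici.derivWithin (uniqueDiffWithinAt_Ioi b)]
  exact hconv.leftDeriv_le_rightDeriv_of_mem_interior hint

include hconv hright hleft in
theorem rightDeriv_le_leftDeriv (ha : 0 ≤ a) (hab : a < b) : ℓp a ≤ ℓm b :=
  (rightDeriv_le_slope hconv hright ha hab).trans (slope_le_leftDeriv hconv hleft ha hab)

include hconv hright hleft in
theorem monotoneOn_rightDeriv : MonotoneOn ℓp (Ici 0) := by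
  intro a ha b _ hab
  rcases hab.eq_or_lt with rfl | hab
  · rfl
  · exact (rightDeriv_le_leftDeriv hconv hright hleft ha hab).trans
      (leftDeriv_le_rightDeriv hconv hright hleft ((mem_Ici.mp ha).trans_lt hab))

include hconv hright hleft in
theorem monotoneOn_leftDeriv : MonotoneOn ℓm (Ioi 0) := by
  intro a ha b _ hab
  rcases hab.eq_or_lt with rfl | hab
  · rfl
  · exact (leftDeriv_le_rightDeriv hconv hright hleft ha).trans
      (rightDeriv_le_leftDeriv hconv hright hleft (le_of_lt ha) hab)

include hmono hright in
theorem rightDeriv_nonneg (ha : 0 ≤ a) : 0 ≤ ℓp a :=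
  (hright a ha).Ioi_of_Ici.nonneg_of_monotoneOn
    (accPt_principal_iff_nhdsWithin.mpr (by simpa using nhdsGT_neBot a))
    (hmono.monotoneOn.mono fun _ hx => ha.trans (le_of_lt hx))

include hconv hmono hleft in
theorem leftDeriv_pos (hb : 0 < b) : 0 < ℓm b := by
  have hslope : 0 < slope ℓ 0 b := by
    rw [slope_def_field]
    exact div_pos (sub_pos.mpr (hmono (mem_Ici.mpr le_rfl) (mem_Ici.mpr hb.le) hb)) (by linarith)
  exact hslope.trans_le (slope_le_leftDeriv hconv hleft le_rfl hb)

include hright hleft in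
theorem continuousOn_Ici_of_hasDerivWithinAt : ContinuousOn ℓ (Ici 0) := by
  intro z hz
  rcases (mem_Ici.mp hz).eq_or_lt with rfl | hz
  · exact (hright 0 le_rfl).continuousWithinAt
  · exact (continuousAt_iff_continuous_left_right.mpr
      ⟨(hleft z hz).continuousWithinAt, (hright z hz.le).continuousWithinAt⟩).continuousWithinAt

include hconv hmono hright hleft in
theorem abs_sub_le_rightDeriv_mul (ha : a ∈ Icc 0 M) (hb : b ∈ Icc 0 M) :
    |ℓ b - ℓ a| ≤ ℓp M * |b - a| := by
  wlog hab : a < b generalizing a b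
  · rcases (not_lt.mp hab).eq_or_lt with rfl | hba
    · simp
    · rw [abs_sub_comm, abs_sub_comm b]
      exact this hb ha hba
  have hslope : slope ℓ a b ≤ ℓp M :=
    (slope_le_leftDeriv hconv hleft ha.1 hab).trans <|
      (leftDeriv_le_rightDeriv hconv hright hleft (ha.1.trans_lt hab)).trans <|
        monotoneOn_rightDeriv hconv hright hleft (ha.1.trans hab.le)
          (ha.1.trans (hab.le.trans hb.2)) hb.2
  rw [slope_def_field, div_le_iff₀ (sub_pos.mpr hab)] at hslope
  rwa [abs_of_nonneg (sub_nonneg.mpr (hmono.monotoneOn ha.1 (ha.1.trans hab.le) hab.le)),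
    abs_of_pos (sub_pos.mpr hab)]

include hconv hmono hright hleft in
theorem antitone_rightDerivKernel : Antitone (rightDerivKernel ℓp ℓm c) := by
  intro x y hxy
  unfold rightDerivKernel
  split_ifs with hy hx hx
  · exact monotoneOn_rightDeriv hconv hright hleft (sub_nonneg.mpr hy) (sub_nonneg.mpr hx)
      (by linarith)
  · exact absurd (hxy.trans hy) hx
  · exact (neg_nonpos.mpr (leftDeriv_pos hconv hmono hleft (by linarith)).le).trans
      (rightDeriv_nonneg hmono hright (by linarith))
  · exact neg_le_neg (monotoneOn_leftDeriv hconv hright hleft (sub_pos.mpr (not_le.mp hx))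
      (sub_pos.mpr (not_le.mp hy)) (by linarith))

include hright hleft in
theorem hasDerivWithinAt_rightDerivKernel (x : ℝ) :
    HasDerivWithinAt (fun α => ℓ |α - x|) (rightDerivKernel ℓp ℓm c x) (Ici c) c := by
  unfold rightDerivKernel
  split_ifs with hx
  · have h := (hright (c - x) (sub_nonneg.mpr hx)).comp c ((hasDerivWithinAt_id c _).sub_const x)
      (fun α hα => sub_le_sub_right hα x)
    rw [mul_one] at h
    refine h.congr (fun α hα => ?_) ?_ <;> simp only [Function.comp_apply, id_eq]
    · rw [abs_of_nonneg (by linarith [mem_Ici.mp hα])]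
    · rw [abs_of_nonneg (sub_nonneg.mpr hx)]
  · push Not at hx
    have h := (hleft (x - c) (sub_pos.mpr hx)).comp c ((hasDerivWithinAt_id c _).const_sub x)
      (fun α hα => sub_le_sub_left hα x)
    rw [mul_neg_one] at h
    refine h.congr_of_eventuallyEq ?_ ?_
    · filter_upwards [nhdsWithin_le_nhds (eventually_lt_nhds hx)] with α hα
      rw [Function.comp_apply, abs_of_neg (sub_neg.mpr hα), neg_sub]
    · rw [Function.comp_apply, abs_of_neg (sub_neg.mpr hx), neg_sub]

include hright hleft in
theorem continuous_comp_abs_sub (α : ℝ) : Continuous fun x => ℓ |α - x| :=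
  (continuousOn_Ici_of_hasDerivWithinAt hright hleft).comp_continuous
    (continuous_const.sub continuous_id).abs fun x => abs_nonneg (α - x)

include hconv hmono hright hleft in
theorem abs_slope_comp_abs_sub_le {x β : ℝ} (hβ : |β - x| ≤ M) (hc : |c - x| ≤ M) :
    |slope (fun α => ℓ |α - x|) c β| ≤ ℓp M := by
  rcases eq_or_ne β c with rfl | hβc
  · simpa using rightDeriv_nonneg hmono hright ((abs_nonneg _).trans hc)
  rw [slope_def_field, abs_div, div_le_iff₀ (abs_pos.mpr (sub_ne_zero.mpr hβc))]
  calc |(ℓ |β - x| - ℓ |c - x|)| ≤ ℓp M * |(|β - x| - |c - x|)| :=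
        abs_sub_le_rightDeriv_mul hconv hmono hright hleft ⟨abs_nonneg _, hc⟩ ⟨abs_nonneg _, hβ⟩
    _ ≤ ℓp M * |β - c| :=
        mul_le_mul_of_nonneg_left (by simpa using abs_abs_sub_abs_le_abs_sub (β - x) (c - x))
          (rightDeriv_nonneg hmono hright ((abs_nonneg _).trans hc))

include hconv hmono hright hleft in
theorem integrable_rightDerivKernel [IsFiniteMeasure ν] (hν : ∀ᵐ x ∂ν, x ∈ Icc A B) :
    Integrable (rightDerivKernel ℓp ℓm c) ν := by
  rw [← Measure.restrict_eq_self_of_ae_mem hν]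
  exact ((antitone_rightDerivKernel hconv hmono hright hleft).antitoneOn _).integrableOn_isCompact
    isCompact_Icc

include hright hleft in
theorem integrable_comp_abs_sub [IsFiniteMeasure ν] (hν : ∀ᵐ x ∂ν, x ∈ Icc A B) (α : ℝ) :
    Integrable (fun x => ℓ |α - x|) ν := by
  rw [← Measure.restrict_eq_self_of_ae_mem hν]
  exact (continuous_comp_abs_sub hright hleft α).integrableOn_Icc

include hconv hmono hright hleft in
theorem convexOn_objective [IsFiniteMeasure ν] (hν : ∀ᵐ x ∂ν, x ∈ Icc A B) :
    ConvexOn ℝ univ (objective ℓ ν) := by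
  refine ⟨convex_univ, fun u _ v _ a b ha hb hab => ?_⟩
  simp only [smul_eq_mul]
  have hint := integrable_comp_abs_sub hright hleft hν
  have hpoint : ∀ x, ℓ |a * u + b * v - x| ≤ a * ℓ |u - x| + b * ℓ |v - x| := fun x => by
    have hcomb : |a * u + b * v - x| ≤ a * |u - x| + b * |v - x| := by
      rw [show a * u + b * v - x = a * (u - x) + b * (v - x) by linear_combination x * hab]
      refine (abs_add_le _ _).trans_eq ?_
      rw [abs_mul, abs_mul, abs_of_nonneg ha, abs_of_nonneg hb]
    calc ℓ |a * u + b * v - x| ≤ ℓ (a * |u - x| + b * |v - x|) :=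
          hmono.monotoneOn (abs_nonneg (a * u + b * v - x)) ((abs_nonneg _).trans hcomb) hcomb
      _ ≤ a * ℓ |u - x| + b * ℓ |v - x| := by
          simpa only [smul_eq_mul] using
            hconv.2 (abs_nonneg (u - x)) (abs_nonneg (v - x)) ha hb hab
  calc objective ℓ ν (a * u + b * v) ≤ ∫ x, a * ℓ |u - x| + b * ℓ |v - x| ∂ν :=
        integral_mono (hint _) (((hint u).const_mul a).add ((hint v).const_mul b)) hpoint
    _ = a * objective ℓ ν u + b * objective ℓ ν v := by
        rw [integral_add ((hint u).const_mul a) ((hint v).const_mul b), integral_const_mul,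
          integral_const_mul, objective, objective]

include hconv hmono hright hleft in
theorem hasDerivWithinAt_objective [IsFiniteMeasure ν] (hν : ∀ᵐ x ∂ν, x ∈ Icc A B) :
    HasDerivWithinAt (objective ℓ ν) (derivRight ℓp ℓm ν c) (Ioi c) c := by
  rw [derivRight_eq_integral (integrable_rightDerivKernel hconv hmono hright hleft hν),
    hasDerivWithinAt_iff_tendsto_slope' self_notMem_Ioi]
  have hint := integrable_comp_abs_sub hright hleft hν
  have hslope : ∀ β, slope (objective ℓ ν) c β = ∫ x, slope (fun α => ℓ |α - x|) c β ∂ν :=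
    fun β => by
      simp only [slope_def_field, objective, ← integral_sub (hint β) (hint c), integral_div]
  rw [tendsto_congr hslope]
  -- bounds `|β - x|` and `|c - x|` for `β ∈ (c, c + 1)` and `x ∈ [A, B]`
  set M := |c - A| + |c - B| + 1
  refine tendsto_integral_filter_of_dominated_convergence (fun _ => ℓp M) ?_ ?_
    (integrable_const _) ?_
  · refine Eventually.of_forall fun β => Continuous.aestronglyMeasurable ?_
    simp only [slope_def_field]
    exact ((continuous_comp_abs_sub hright hleft β).sub
      (continuous_comp_abs_sub hright hleft c)).div_const _
  · filter_upwards [Ioo_mem_nhdsGT (lt_add_one c)] with β hβ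
    filter_upwards [hν] with x hx
    refine abs_slope_comp_abs_sub_le hconv hmono hright hleft ?_ ?_ <;> rw [abs_le] <;>
      constructor <;> linarith [hβ.1, hβ.2, hx.1, hx.2, le_abs_self (c - A), neg_abs_le (c - B),
        abs_nonneg (c - A), abs_nonneg (c - B)]
  · refine ae_of_all _ fun x => ?_
    exact (hasDerivWithinAt_iff_tendsto_slope' self_notMem_Ioi).mp
      ((hasDerivWithinAt_rightDerivKernel hright hleft x).mono Ioi_subset_Ici_self)

include hconv hmono hright hleft in
theorem objective_lt_of_derivRight_pos [IsFiniteMeasure ν] (hν : ∀ᵐ x ∂ν, x ∈ Icc A B)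
    (h : 0 < derivRight ℓp ℓm ν c) {β : ℝ} (hβ : c < β) :
    objective ℓ ν c < objective ℓ ν β :=
  (slope_pos_iff_of_le hβ.le).mp <| h.trans_le <|
    (convexOn_objective hconv hmono hright hleft hν).le_slope_of_hasDerivWithinAt_Ioi trivial
      trivial hβ (hasDerivWithinAt_objective hconv hmono hright hleft hν)

include hconv hmono hright hleft in
theorem exists_objective_lt_of_derivRight_neg [IsFiniteMeasure ν] (hν : ∀ᵐ x ∂ν, x ∈ Icc A B)
    (h : derivRight ℓp ℓm ν c < 0) :
    ∃ β, c < β ∧ objective ℓ ν β < objective ℓ ν c := by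
  have hslope := (hasDerivWithinAt_iff_tendsto_slope' self_notMem_Ioi).mp
    (hasDerivWithinAt_objective (c := c) hconv hmono hright hleft hν)
  obtain ⟨β, hneg, hβ⟩ := ((hslope.eventually (gt_mem_nhds h)).and self_mem_nhdsWithin).exists
  exact ⟨β, hβ, (slope_neg_iff_of_le (le_of_lt hβ)).mp hneg⟩

include hconv hmono hright hleft in
theorem abs_derivRight_sub_le [IsProbabilityMeasure μ] [IsProbabilityMeasure ν]
    (hμ : ∀ᵐ x ∂μ, x ∈ Icc A B) (hν : ∀ᵐ x ∂ν, x ∈ Icc A B) {ε : ℝ}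
    (htv : ∀ s, MeasurableSet s → |(ν s).toReal - (μ s).toReal| ≤ ε) :
    |derivRight ℓp ℓm ν c - derivRight ℓp ℓm μ c| ≤
      (rightDerivKernel ℓp ℓm c A - rightDerivKernel ℓp ℓm c B) * ε := by
  have hanti := antitone_rightDerivKernel (c := c) hconv hmono hright hleft
  rw [derivRight_eq_integral (integrable_rightDerivKernel hconv hmono hright hleft hν),
    derivRight_eq_integral (integrable_rightDerivKernel hconv hmono hright hleft hμ)]
  exact abs_integral_sub_integral_le_of_forall_abs_measure_sub_le htv hanti.measurable
    (hμ.mono fun x hx => ⟨hanti hx.2, hanti hx.1⟩) (hν.mono fun x hx => ⟨hanti hx.2, hanti hx.1⟩)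

include hconv hmono hright hleft in
theorem derivRight_mixDirac [IsProbabilityMeasure μ] (hμ : μ (Icc A B) = 1) {t y : ℝ}
    (ht : t ∈ Icc (0 : ℝ) 1) (hy : y ∈ Icc A B) :
    derivRight ℓp ℓm (mixDirac μ t y) c =
      (1 - t) * derivRight ℓp ℓm μ c + t * rightDerivKernel ℓp ℓm c y := by
  have := isProbabilityMeasure_mixDirac (μ := μ) (y := y) ht
  have hsupp := mixDirac_apply_eq_one ht measurableSet_Icc hμ hy
  have hint := integrable_rightDerivKernel (c := c) hconv hmono hright hleft
    (ae_mem_of_measure_eq_one measurableSet_Icc hμ)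
  rw [derivRight_eq_integral (integrable_rightDerivKernel hconv hmono hright hleft
      (ae_mem_of_measure_eq_one measurableSet_Icc hsupp)), integral_mixDirac ht hint,
    derivRight_eq_integral hint]

include hconv hmono hright hleft in
theorem derivRight_pos_iff [IsProbabilityMeasure μ] (hμ : μ (Icc A B) = 1) (hcB : c < B) :
    0 < derivRight ℓp ℓm μ c ↔ ∃ ε > 0, ∀ ν : Measure ℝ, IsProbabilityMeasure ν →
      ν (Icc A B) = 1 → (∀ s, MeasurableSet s → |(ν s).toReal - (μ s).toReal| ≤ ε) →
      ∀ β, c < β → objective ℓ ν c < objective ℓ ν β := by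
  have hμ' := ae_mem_of_measure_eq_one measurableSet_Icc hμ
  constructor
  · intro hpos
    set d := derivRight ℓp ℓm μ c
    set K := rightDerivKernel ℓp ℓm c A - rightDerivKernel ℓp ℓm c B
    refine ⟨d / (|K| + 1), by positivity, fun ν _ hν htv β hβ => ?_⟩
    have hν' := ae_mem_of_measure_eq_one measurableSet_Icc hν
    refine objective_lt_of_derivRight_pos hconv hmono hright hleft hν' ?_ hβ
    have hclose := abs_derivRight_sub_le (c := c) hconv hmono hright hleft hμ' hν' htv
    have hKε : K * (d / (|K| + 1)) < d := by
      calc K * (d / (|K| + 1)) ≤ |K| * (d / (|K| + 1)) :=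
            mul_le_mul_of_nonneg_right (le_abs_self K) (by positivity)
        _ < d := by
            rw [mul_div_assoc', div_lt_iff₀ (by positivity)]
            linarith
    linarith [(abs_le.mp hclose).1]
  · rintro ⟨ε, hε, hstable⟩
    by_contra! hnonpos
    set t := min ε 1
    have ht : t ∈ Icc (0 : ℝ) 1 := ⟨le_min hε.le zero_le_one, min_le_right _ _⟩
    have hB : B ∈ Icc A B :=
      ⟨nonempty_Icc.mp (nonempty_of_measure_ne_zero (μ := μ) (by rw [hμ]; exact one_ne_zero)),
        le_rfl⟩
    have := isProbabilityMeasure_mixDirac (μ := μ) (y := B) ht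
    have hsupp := mixDirac_apply_eq_one ht measurableSet_Icc hμ hB
    have hneg : derivRight ℓp ℓm (mixDirac μ t B) c < 0 := by
      rw [derivRight_mixDirac hconv hmono hright hleft hμ ht hB, rightDerivKernel,
        if_neg (not_le.mpr hcB)]
      have := leftDeriv_pos hconv hmono hleft (sub_pos.mpr hcB)
      nlinarith [mul_nonpos_of_nonneg_of_nonpos (sub_nonneg.mpr ht.2) hnonpos,
        lt_min hε zero_lt_one]
    obtain ⟨β, hβ, hlt⟩ := exists_objective_lt_of_derivRight_neg hconv hmono hright hleft
      (ae_mem_of_measure_eq_one measurableSet_Icc hsupp) hneg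
    exact hlt.not_gt (hstable _ this hsupp
      (fun s _ => (abs_mixDirac_apply_sub_le ht s).trans (min_le_left _ _)) β hβ)

include hconv hmono hright hleft in
theorem derivLeft_pos_iff [IsProbabilityMeasure μ] (hμ : μ (Icc A B) = 1) (hAc : A < c) :
    0 < derivLeft ℓp ℓm μ c ↔ ∃ ε > 0, ∀ ν : Measure ℝ, IsProbabilityMeasure ν →
      ν (Icc A B) = 1 → (∀ s, MeasurableSet s → |(ν s).toReal - (μ s).toReal| ≤ ε) →
      ∀ β, β < c → objective ℓ ν c < objective ℓ ν β := by
  have hμneg : μ.neg (Icc (-B) (-A)) = 1 := by rwa [Measure.neg_apply, neg_Icc, neg_neg, neg_neg]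
  rw [← derivRight_neg, derivRight_pos_iff hconv hmono hright hleft hμneg (neg_lt_neg hAc)]
  refine exists_congr fun ε => and_congr_right fun _ => ⟨fun h ν _ hν htv β hβ => ?_,
    fun h ν _ hν htv β hβ => ?_⟩
  · have := h ν.neg inferInstance (by rwa [Measure.neg_apply, neg_Icc, neg_neg, neg_neg])
      (forall_abs_neg_measure_sub_le htv) (-β) (neg_lt_neg hβ)
    rwa [objective_neg, objective_neg] at this
  · have := h ν.neg inferInstance (by rwa [Measure.neg_apply, neg_Icc])
      (by simpa only [Measure.neg_neg] using forall_abs_neg_measure_sub_le htv) (-β)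
      (by linarith)
    rwa [← objective_neg (ν := ν) β, ← objective_neg (ν := ν) (-c), neg_neg]

end ConvexLoss

end LossMinimizer

end

theorem stmt_11_general (ℓ : ℝ → ℝ)
    (h_convex : ConvexOn ℝ (Set.Ici 0) ℓ)
    (h_smono : StrictMonoOn ℓ (Set.Ici 0))
    (ℓp ℓm : ℝ → ℝ)
    (h_right : ∀ z, 0 ≤ z → HasDerivWithinAt ℓ (ℓp z) (Set.Ici z) z)
    (h_left : ∀ z, 0 < z → HasDerivWithinAt ℓ (ℓm z) (Set.Iic z) z)
    (A B : ℝ)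
    (μ : Measure ℝ) [IsProbabilityMeasure μ] (hμsupp : μ (Set.Icc A B) = 1)
    (c : ℝ) (hc : c ∈ Set.Ioo A B) :
    ((0 < (∫ x in Set.Iic c, ℓp (c - x) ∂μ) - ∫ x in Set.Ioi c, ℓm (x - c) ∂μ) ∧
     (0 < (∫ x in Set.Ici c, ℓp (x - c) ∂μ) - ∫ x in Set.Iio c, ℓm (c - x) ∂μ))
    ↔
    (∃ ε > (0 : ℝ), ∀ ν : Measure ℝ, IsProbabilityMeasure ν →
      ν (Set.Icc A B) = 1 →
      (∀ s : Set ℝ, MeasurableSet s → |(ν s).toReal - (μ s).toReal| ≤ ε) →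
      {α : ℝ | ∀ β : ℝ, (∫ x, ℓ |α - x| ∂ν) ≤ ∫ x, ℓ |β - x| ∂ν} = {c}) := by
  change 0 < LossMinimizer.derivRight ℓp ℓm μ c ∧ 0 < LossMinimizer.derivLeft ℓp ℓm μ c ↔ _
  rw [LossMinimizer.derivRight_pos_iff h_convex h_smono h_right h_left hμsupp hc.2,
    LossMinimizer.derivLeft_pos_iff h_convex h_smono h_right h_left hμsupp hc.1]
  constructor
  · rintro ⟨⟨ε₁, hε₁, hright⟩, ⟨ε₂, hε₂, hleft⟩⟩
    refine ⟨min ε₁ ε₂, lt_min hε₁ hε₂, fun ν hν hsupp htv =>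
      setOf_forall_le_eq_singleton_iff.mpr fun β hβ => ?_⟩
    rcases hβ.lt_or_gt with hβ | hβ
    · exact hleft ν hν hsupp (fun s hs => (htv s hs).trans (min_le_right _ _)) β hβ
    · exact hright ν hν hsupp (fun s hs => (htv s hs).trans (min_le_left _ _)) β hβ
  · rintro ⟨ε, hε, hunique⟩
    have hlt := fun ν hν hsupp htv =>
      setOf_forall_le_eq_singleton_iff.mp (hunique ν hν hsupp htv)
    exact ⟨⟨ε, hε, fun ν hν hsupp htv β hβ => hlt ν hν hsupp htv β hβ.ne'⟩,
      ⟨ε, hε, fun ν hν hsupp htv β hβ => hlt ν hν hsupp htv β hβ.ne⟩⟩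

/-- Robustness characterization of stickiness on the line: the one-sided derivatives
of the objective at `c` are both positive iff the minimizer set equals `{c}` for
every probability measure `ν` (supported in `[A,B]`) within total variation
distance `ε` of `μ`, for some `ε > 0`. -/
theorem stmt_11 (ℓ : ℝ → ℝ)
    (h_convex : ConvexOn ℝ (Set.Ici 0) ℓ)
    (h_smono : StrictMonoOn ℓ (Set.Ici 0))
    (h_nonneg : ∀ z ∈ Set.Ici (0 : ℝ), 0 ≤ ℓ z)
    (ℓp ℓm : ℝ → ℝ)
    (h_right : ∀ z, 0 ≤ z → HasDerivWithinAt ℓ (ℓp z) (Set.Ici z) z)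
    (h_left : ∀ z, 0 < z → HasDerivWithinAt ℓ (ℓm z) (Set.Iic z) z)
    (A B : ℝ) (hAB : A < B)
    (μ : Measure ℝ) [IsProbabilityMeasure μ] (hμsupp : μ (Set.Icc A B) = 1)
    (c : ℝ) (hc : c ∈ Set.Ioo A B) :
    ((0 < (∫ x in Set.Iic c, ℓp (c - x) ∂μ) - ∫ x in Set.Ioi c, ℓm (x - c) ∂μ) ∧
     (0 < (∫ x in Set.Ici c, ℓp (x - c) ∂μ) - ∫ x in Set.Iio c, ℓm (c - x) ∂μ))
    ↔
    (∃ ε > (0 : ℝ), ∀ ν : Measure ℝ, IsProbabilityMeasure ν →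
      ν (Set.Icc A B) = 1 →
      (∀ s : Set ℝ, MeasurableSet s → |(ν s).toReal - (μ s).toReal| ≤ ε) →
      {α : ℝ | ∀ β : ℝ, (∫ x, ℓ |α - x| ∂ν) ≤ ∫ x, ℓ |β - x| ∂ν} = {c}) :=
  stmt_11_general ℓ h_convex h_smono ℓp ℓm h_right h_left A B μ hμsupp c hc
end

section
/- Let ν be a Borel probability measure on ℝ whose support is contained in a compact interval and which satisfies ν((−∞,0)) = ν((0,∞)) = 1/2. Define Δ(t) = ν((0,t)) for t > 0 and Δ(t) = ν((t,0)) for t < 0. Then for every n ≥ 1, every sequence of empirical medians (m̂_n) and every t > 0, P(|m̂_n| ≥ t) ≤ (1 − 4Δ(t)²)^{n/2} + (1 − 4Δ(−t)²)^{n/2}. -/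
/-!
If `m̂_n ≥ t`, then at least half of the samples lie in `[t, ∞)`: otherwise moving `m̂_n` down to
the largest sample below `t` would strictly decrease `β ↦ ∑ |β - Y_k|`. Symmetrically for
`m̂_n ≤ -t`. The number of samples in `[t, ∞)` is binomial with parameter
`p = ν[t, ∞) ≤ 1/2 - Δ(t)`, and the Chernoff bound at the threshold `n/2` gives
`(4p(1 - p))^{n/2} ≤ (1 - 4Δ(t)²)^{n/2}`.
-/

open MeasureTheory ProbabilityTheory Finset Real

def IsSampleMedian {ι : Type*} (s : Finset ι) (z : ι → ℝ) (m : ℝ) : Prop :=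
  ∀ β : ℝ, ∑ k ∈ s, |m - z k| ≤ ∑ k ∈ s, |β - z k|

namespace IsSampleMedian

variable {ι : Type*} {s : Finset ι} {z : ι → ℝ} {m t : ℝ}

lemma neg (h : IsSampleMedian s z m) : IsSampleMedian s (-z) (-m) := by
  intro β
  have key : ∀ a b : ℝ, |a - -b| = |-a - b| := fun a b => by rw [← abs_neg]; ring_nf
  simpa only [Pi.neg_apply, key, neg_neg] using h (-β)

lemma card_le_two_mul_card_ge_of_le (h : IsSampleMedian s z m) (ht : t ≤ m) :
    #s ≤ 2 * #{k ∈ s | t ≤ z k} := by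
  set F := s.filter (fun k => t ≤ z k)
  set G := s.filter (fun k => ¬ t ≤ z k)
  have hcard : #F + #G = #s := card_filter_add_card_filter_not _
  by_contra! hlt
  have hFG : (#F : ℝ) < #G := by exact_mod_cast (by omega : #F < #G)
  obtain ⟨j, hjG, hj_max⟩ := G.exists_max_image z (card_pos.mp (by omega))
  have hjt : z j < t := not_le.mp (mem_filter.mp hjG).2
  have hF : ∀ k ∈ F, |z j - z k| ≤ |m - z k| + (m - z j) := fun k _ => by
    have := abs_sub_le (z j) m (z k)
    rw [abs_sub_comm (z j) m, abs_of_pos (by linarith : 0 < m - z j)] at this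
    linarith
  have hG : ∀ k ∈ G, |m - z k| = |z j - z k| + (m - z j) := fun k hk => by
    have := hj_max k hk
    rw [abs_of_nonneg (by linarith : 0 ≤ m - z k), abs_of_nonneg (by linarith : 0 ≤ z j - z k)]
    ring
  have hmin := h (z j)
  rw [← sum_filter_add_sum_filter_not s (fun k => t ≤ z k),
    ← sum_filter_add_sum_filter_not s (fun k => t ≤ z k) (fun k => |z j - z k|)] at hmin
  have hF_sum := sum_le_sum hF
  rw [sum_congr rfl hG] at hmin
  simp only [sum_add_distrib, sum_const, nsmul_eq_mul] at hF_sum hmin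
  nlinarith [mul_pos (sub_pos.mpr hFG) (by linarith : 0 < m - z j)]

lemma card_le_two_mul_card_le_of_ge (h : IsSampleMedian s z m) (ht : m ≤ t) :
    #s ≤ 2 * #{k ∈ s | z k ≤ t} := by
  simpa only [Pi.neg_apply, neg_le_neg_iff] using
    h.neg.card_le_two_mul_card_ge_of_le (neg_le_neg ht)

lemma card_le_two_mul_card_ge_or_le_of_le_abs (h : IsSampleMedian s z m) (ht : t ≤ |m|) :
    #s ≤ 2 * #{k ∈ s | t ≤ z k} ∨ #s ≤ 2 * #{k ∈ s | z k ≤ -t} := by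
  rcases le_abs.mp ht with ht | ht
  · exact .inl (h.card_le_two_mul_card_ge_of_le ht)
  · exact .inr (h.card_le_two_mul_card_le_of_ge (by linarith))

end IsSampleMedian

section Intervals

variable {α : Type*} [LinearOrder α] [TopologicalSpace α] [OrderClosedTopology α]
  [MeasurableSpace α] [OpensMeasurableSpace α] {ν : Measure α} [IsFiniteMeasure ν] {a b : α}

lemma measureReal_Ici_add_measureReal_Ioo (hab : a < b) :
    ν.real (Set.Ici b) + ν.real (Set.Ioo a b) = ν.real (Set.Ioi a) := by
  rw [add_comm, ← measureReal_union ((Set.Iio_disjoint_Ici le_rfl).mono_left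
    Set.Ioo_subset_Iio_self) measurableSet_Ici, Set.Ioo_union_Ici_eq_Ioi hab]

lemma measureReal_Iic_add_measureReal_Ioo (hab : a < b) :
    ν.real (Set.Iic a) + ν.real (Set.Ioo a b) = ν.real (Set.Iio b) := by
  rw [← measureReal_union ((Set.Iic_disjoint_Ioi le_rfl).mono_right Set.Ioo_subset_Ioi_self)
    measurableSet_Ioo, Set.Iic_union_Ioo_eq_Iio hab]

end Intervals

lemma exp_mul_indicator_one {Ω : Type*} (A : Set Ω) (θ : ℝ) :
    (fun ω => exp (θ * A.indicator 1 ω)) = fun ω => 1 + (exp θ - 1) * A.indicator 1 ω := by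
  funext ω
  by_cases hω : ω ∈ A <;> simp [hω]

section Chernoff

variable {Ω : Type*} [MeasurableSpace Ω] {P : Measure Ω} [IsProbabilityMeasure P]

lemma integrable_exp_mul_indicator_one {A : Set Ω} (hA : MeasurableSet A) (θ : ℝ) :
    Integrable (fun ω => exp (θ * A.indicator 1 ω)) P := by
  rw [exp_mul_indicator_one]
  exact (integrable_const 1).add (((integrable_const 1).indicator hA).const_mul _)

lemma mgf_indicator_one {A : Set Ω} (hA : MeasurableSet A) (θ : ℝ) :
    mgf (A.indicator 1) P θ = 1 + P.real A * (exp θ - 1) := by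
  rw [mgf, exp_mul_indicator_one,
    integral_add (integrable_const 1) (((integrable_const 1).indicator hA).const_mul _),
    integral_const_mul, integral_indicator_one hA]
  simp only [integral_const, probReal_univ, smul_eq_mul, one_mul]
  ring

variable {α : Type*} [MeasurableSpace α] {Y : ℕ → Ω → α} {S : Set α} [DecidablePred (· ∈ S)]

lemma measureReal_le_two_mul_card_mem_le_exp_mul (hY_meas : ∀ k, Measurable (Y k))
    (hY_indep : iIndepFun Y P) (hS : MeasurableSet S) {p : ℝ}
    (hp : ∀ k, P.real (Y k ⁻¹' S) = p) (n : ℕ) {θ : ℝ} (hθ : 0 ≤ θ) :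
    P.real {ω | n ≤ 2 * #{k ∈ range n | Y k ω ∈ S}} ≤
      exp (-θ * (n / 2)) * (1 + p * (exp θ - 1)) ^ n := by
  set X : ℕ → Ω → ℝ := fun k => (Y k ⁻¹' S).indicator 1
  have hX_meas : ∀ k, Measurable (X k) := fun k => measurable_const.indicator (hY_meas k hS)
  have hX_indep : iIndepFun X P :=
    hY_indep.comp (fun _ => S.indicator 1) (fun _ => measurable_const.indicator hS)
  have hX_sum : ∀ ω, (∑ k ∈ range n, X k) ω = #{k ∈ range n | Y k ω ∈ S} := fun ω => by
    have hX : ∀ k, X k ω = if Y k ω ∈ S then 1 else 0 := fun k => by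
      by_cases h : Y k ω ∈ S <;> simp [X, h]
    rw [Finset.sum_apply, sum_congr rfl fun k _ => hX k, sum_boole]
  have hevent : {ω | n ≤ 2 * #{k ∈ range n | Y k ω ∈ S}} =
      {ω | (n : ℝ) / 2 ≤ (∑ k ∈ range n, X k) ω} := by
    ext ω
    rw [Set.mem_ofPred_eq, Set.mem_ofPred_eq, hX_sum, div_le_iff₀ two_pos, mul_comm]
    norm_cast
  have hmgf : mgf (∑ k ∈ range n, X k) P θ = (1 + p * (exp θ - 1)) ^ n := by
    rw [hX_indep.mgf_sum hX_meas, prod_congr rfl fun k _ => mgf_indicator_one (hY_meas k hS) θ]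
    simp [hp]
  rw [hevent, ← hmgf]
  exact measure_ge_le_exp_mul_mgf _ hθ
    (hX_indep.integrable_exp_mul_sum hX_meas fun k _ =>
      integrable_exp_mul_indicator_one (hY_meas k hS) θ)

lemma measureReal_le_two_mul_card_mem_le (hY_meas : ∀ k, Measurable (Y k))
    (hY_indep : iIndepFun Y P) (hS : MeasurableSet S) {p : ℝ}
    (hp : ∀ k, P.real (Y k ⁻¹' S) = p) (hp_half : p ≤ 1 / 2) (n : ℕ) :
    P.real {ω | n ≤ 2 * #{k ∈ range n | Y k ω ∈ S}} ≤ (4 * p * (1 - p)) ^ ((n : ℝ) / 2) := by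
  rcases (hp 0 ▸ measureReal_nonneg : 0 ≤ p).eq_or_lt with rfl | hp_pos
  · rcases n.eq_zero_or_pos with rfl | hn
    · simp
    rw [mul_zero, zero_mul, zero_rpow (by positivity)]
    have hsub : {ω | n ≤ 2 * #{k ∈ range n | Y k ω ∈ S}} ⊆ ⋃ k ∈ range n, Y k ⁻¹' S := by
      intro ω hω
      by_contra hnot
      simp only [Set.mem_iUnion, Set.mem_preimage, not_exists] at hnot
      have : #{k ∈ range n | Y k ω ∈ S} = 0 := card_eq_zero.mpr (filter_eq_empty_iff.mpr hnot)
      exact (this ▸ hω : n ≤ 2 * 0).not_gt hn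
    calc _ ≤ P.real (⋃ k ∈ range n, Y k ⁻¹' S) := measureReal_mono hsub (measure_ne_top _ _)
      _ ≤ ∑ k ∈ range n, P.real (Y k ⁻¹' S) := measureReal_biUnion_finset_le _ _
      _ = 0 := by simp [hp]
  set q := 1 - p
  have hq_pos : 0 < q := by linarith
  have hθ : 0 ≤ log (q / p) := log_nonneg ((one_le_div hp_pos).mpr (by linarith))
  refine (measureReal_le_two_mul_card_mem_le_exp_mul hY_meas hY_indep hS hp n hθ).trans_eq ?_
  -- `θ = log (q / p)` is the optimal Chernoff parameter for the threshold `n / 2`.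
  have hexp : exp (-log (q / p) * (n / 2)) = (p / q) ^ ((n : ℝ) / 2) := by
    rw [← log_inv, inv_div, ← rpow_def_of_pos (div_pos hp_pos hq_pos)]
  have hmgf : (1 + p * (exp (log (q / p)) - 1)) ^ n = ((2 * q) ^ 2) ^ ((n : ℝ) / 2) := by
    rw [← rpow_natCast_mul (by positivity), show ((2 : ℕ) : ℝ) * (n / 2) = n by push_cast; ring,
      rpow_natCast, exp_log (div_pos hq_pos hp_pos)]
    congr 1
    field_simp
    ring
  rw [hexp, hmgf, ← mul_rpow (by positivity) (by positivity)]
  congr 1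
  field_simp
  ring

lemma measureReal_le_two_mul_card_mem_le_one_sub_four_mul_sq {ν : Measure α}
    (hY_meas : ∀ k, Measurable (Y k)) (hY_indep : iIndepFun Y P) (hY_dist : ∀ k, P.map (Y k) = ν)
    (hS : MeasurableSet S) {Δ : ℝ} (hΔ : 0 ≤ Δ) (hS_le : ν.real S + Δ ≤ 1 / 2) (n : ℕ) :
    P.real {ω | n ≤ 2 * #{k ∈ range n | Y k ω ∈ S}} ≤ (1 - 4 * Δ ^ 2) ^ ((n : ℝ) / 2) := by
  have hp : ∀ k, P.real (Y k ⁻¹' S) = ν.real S := fun k => by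
    rw [← map_measureReal_apply (hY_meas k) hS, hY_dist k]
  have hp_nonneg : 0 ≤ ν.real S := measureReal_nonneg
  refine (measureReal_le_two_mul_card_mem_le hY_meas hY_indep hS hp (by linarith) n).trans ?_
  -- `4p(1 - p) = 1 - (1 - 2p)²` with `1 - 2p ≥ 2Δ ≥ 0`.
  exact rpow_le_rpow (by nlinarith) (by nlinarith) (by positivity)

end Chernoff

theorem stmt_15_general (ν : Measure ℝ) [IsProbabilityMeasure ν]
    (hleft : ν (Set.Iio 0) = 1 / 2) (hright : ν (Set.Ioi 0) = 1 / 2)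
    {Ω : Type*} [MeasurableSpace Ω] (P : Measure Ω) [IsProbabilityMeasure P]
    (Y : ℕ → Ω → ℝ)
    (hY_meas : ∀ k, Measurable (Y k))
    (hY_dist : ∀ k, P.map (Y k) = ν)
    (hY_indep : ProbabilityTheory.iIndepFun Y P)
    (mhat : ℕ → Ω → ℝ)
    (hmhat_med : ∀ n, 1 ≤ n → ∀ ω β,
      (∑ k ∈ Finset.range n, |mhat n ω - Y k ω|) ≤ ∑ k ∈ Finset.range n, |β - Y k ω|) :
    ∀ n : ℕ, 1 ≤ n → ∀ t : ℝ, 0 < t →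
      (P {ω | t ≤ |mhat n ω|}).toReal ≤
        (1 - 4 * (ν (Set.Ioo 0 t)).toReal ^ 2) ^ ((n : ℝ) / 2)
          + (1 - 4 * (ν (Set.Ioo (-t) 0)).toReal ^ 2) ^ ((n : ℝ) / 2) := by
  intro n hn t ht
  have hν_pos : ν.real (Set.Ici t) + ν.real (Set.Ioo 0 t) ≤ 1 / 2 := by
    rw [measureReal_Ici_add_measureReal_Ioo ht, measureReal_def, hright]
    norm_num
  have hν_neg : ν.real (Set.Iic (-t)) + ν.real (Set.Ioo (-t) 0) ≤ 1 / 2 := by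
    rw [measureReal_Iic_add_measureReal_Ioo (neg_lt_zero.mpr ht), measureReal_def, hleft]
    norm_num
  have hsub : {ω | t ≤ |mhat n ω|} ⊆
      {ω | n ≤ 2 * #{k ∈ range n | Y k ω ∈ Set.Ici t}} ∪
        {ω | n ≤ 2 * #{k ∈ range n | Y k ω ∈ Set.Iic (-t)}} := fun ω hω => by
    have hmed : IsSampleMedian (range n) (fun k => Y k ω) (mhat n ω) := hmhat_med n hn ω
    simpa only [card_range, Set.mem_Ici, Set.mem_Iic, Set.mem_union, Set.mem_ofPred_eq] using
      hmed.card_le_two_mul_card_ge_or_le_of_le_abs hω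
  exact (measureReal_mono hsub).trans <| (measureReal_union_le _ _).trans <| add_le_add
    (measureReal_le_two_mul_card_mem_le_one_sub_four_mul_sq hY_meas hY_indep hY_dist
      measurableSet_Ici measureReal_nonneg hν_pos n)
    (measureReal_le_two_mul_card_mem_le_one_sub_four_mul_sq hY_meas hY_indep hY_dist
      measurableSet_Iic measureReal_nonneg hν_neg n)

/-- Two-sided concentration of the empirical median on the line: if
`ν((−∞,0)) = ν((0,∞)) = 1/2`, then for every `n ≥ 1` and `t > 0`,
`P(|m̂_n| ≥ t) ≤ (1 − 4Δ(t)²)^{n/2} + (1 − 4Δ(−t)²)^{n/2}`, where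
`Δ(t) = ν((0,t))` for `t > 0` and `Δ(t) = ν((t,0))` for `t < 0`. -/
theorem stmt_15 (ν : Measure ℝ) [IsProbabilityMeasure ν]
    (A B : ℝ) (hsupp : ν (Set.Icc A B) = 1)
    (hleft : ν (Set.Iio 0) = 1 / 2) (hright : ν (Set.Ioi 0) = 1 / 2)
    {Ω : Type*} [MeasurableSpace Ω] (P : Measure Ω) [IsProbabilityMeasure P]
    (Y : ℕ → Ω → ℝ)
    (hY_meas : ∀ k, Measurable (Y k))
    (hY_dist : ∀ k, P.map (Y k) = ν)
    (hY_indep : ProbabilityTheory.iIndepFun Y P)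
    (mhat : ℕ → Ω → ℝ)
    (hmhat_meas : ∀ n, Measurable (mhat n))
    (hmhat_med : ∀ n, 1 ≤ n → ∀ ω β,
      (∑ k ∈ Finset.range n, |mhat n ω - Y k ω|) ≤ ∑ k ∈ Finset.range n, |β - Y k ω|) :
    ∀ n : ℕ, 1 ≤ n → ∀ t : ℝ, 0 < t →
      (P {ω | t ≤ |mhat n ω|}).toReal ≤
        (1 - 4 * (ν (Set.Ioo 0 t)).toReal ^ 2) ^ ((n : ℝ) / 2)
          + (1 - 4 * (ν (Set.Ioo (-t) 0)).toReal ^ 2) ^ ((n : ℝ) / 2) :=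
  stmt_15_general ν hleft hright P Y hY_meas hY_dist hY_indep mhat hmhat_med
end

section
/- Let n ≥ 4 be an integer, let ε ∈ (0, 1/2], let m ≥ 1 and let p₁, …, p_m be real numbers with 0 ≤ p_j ≤ 1/2 − ε for every j and Σ_{j=1}^m p_j ≤ 1/2. Then Σ_{j=1}^m (4 p_j (1 − p_j))^{n/2} ≤ 2 e^{−n ε²}. -/
/-- Let `n ≥ 4` be an integer, `ε ∈ (0, 1/2]`, `m ≥ 1`, and `p₁, …, p_m` reals with
`0 ≤ p_j ≤ 1/2 − ε` for every `j` and `∑ p_j ≤ 1/2`. Then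
`∑_j (4 p_j (1 − p_j))^{n/2} ≤ 2 e^{−n ε²}`. -/
theorem stmt_19 (n : ℕ) (hn : 4 ≤ n) (ε : ℝ) (hε : 0 < ε) (hε' : ε ≤ 1 / 2)
    (m : ℕ) (hm : 1 ≤ m) (p : Fin m → ℝ)
    (hp0 : ∀ j, 0 ≤ p j) (hp1 : ∀ j, p j ≤ 1 / 2 - ε)
    (hpsum : (∑ j, p j) ≤ 1 / 2) :
    (∑ j, (4 * p j * (1 - p j)) ^ ((n : ℝ) / 2)) ≤ 2 * Real.exp (-(n : ℝ) * ε ^ 2) := by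
  have hn4 : (4 : ℝ) ≤ (n : ℝ) := by exact_mod_cast hn
  set e : ℝ := ((n : ℝ) - 2) / 2 with he
  have he0 : 0 ≤ e := by rw [he]; linarith
  have hb0 : (0 : ℝ) ≤ 1 - 4 * ε ^ 2 := by nlinarith
  set C : ℝ := (1 - 4 * ε ^ 2) ^ e with hC
  have hC0 : 0 ≤ C := Real.rpow_nonneg hb0 e
  have hterm : ∀ j, (4 * p j * (1 - p j)) ^ ((n : ℝ) / 2) ≤ C * (4 * p j) := by
    intro j
    have hp := hp0 j
    have hp' := hp1 j
    have hx0 : 0 ≤ 4 * p j * (1 - p j) := by nlinarith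
    have hx1 : 4 * p j * (1 - p j) ≤ 1 - 4 * ε ^ 2 := by
      nlinarith [sq_nonneg (1 - 2 * p j - 2 * ε), sq_nonneg (1 - 2 * p j + 2 * ε)]
    have hsum : (n : ℝ) / 2 = e + 1 := by rw [he]; ring
    rw [hsum, Real.rpow_add' hx0 (by positivity), Real.rpow_one]
    have h1 : (4 * p j * (1 - p j)) ^ e ≤ C := Real.rpow_le_rpow hx0 hx1 he0
    have h2 : 4 * p j * (1 - p j) ≤ 4 * p j := by nlinarith
    exact mul_le_mul h1 h2 hx0 hC0
  calc (∑ j, (4 * p j * (1 - p j)) ^ ((n : ℝ) / 2))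
      ≤ ∑ j, C * (4 * p j) := Finset.sum_le_sum fun j _ => hterm j
    _ = C * 4 * ∑ j, p j := by
        rw [Finset.mul_sum]
        exact Finset.sum_congr rfl fun j _ => by ring
    _ ≤ C * 4 * (1 / 2) := by
        apply mul_le_mul_of_nonneg_left hpsum (by positivity)
    _ = 2 * C := by ring
    _ ≤ 2 * Real.exp (-(n : ℝ) * ε ^ 2) := by
        gcongr 2 * ?_
        have h1 : (1 - 4 * ε ^ 2) ≤ Real.exp (-(4 * ε ^ 2)) := by
          have := Real.add_one_le_exp (-(4 * ε ^ 2))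
          linarith
        calc C ≤ (Real.exp (-(4 * ε ^ 2))) ^ e := Real.rpow_le_rpow hb0 h1 he0
          _ = Real.exp (-(4 * ε ^ 2) * e) := (Real.exp_mul _ _).symm
          _ ≤ Real.exp (-(n : ℝ) * ε ^ 2) := by
              apply Real.exp_le_exp.mpr
              rw [he]
              nlinarith [sq_nonneg ε, hε.le, mul_pos hε hε]
end
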